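/- arXiv:1006.5762 — 13 statements merged into one kernel-verified Lean document; each statement's English description precedes it below -/
import Mathlib

section
/- Let p be a prime and q a positive integer not divisible by p. For every delay offset τ ∈ Z_{pq}, the Hamming cross-correlation of the CRT sequences s_1 and s_0 satisfies H_{s_1 s_0}(τ) ∈ {⌊q/p⌋, ⌊q/p⌋ + 1}. -/
/-- The characteristic set `I_{g,p,q} = {(g·t mod p, t mod q) : 0 ≤ t < q}` in `Z_p ⊕ Z_q`. -/
def crtIdx (p q : ℕ) (g : ZMod p) : Finset (ZMod p × ZMod q) :=
  (Finset.range q).image (fun t : ℕ => ((g * (t : ZMod p), (t : ZMod q)) : ZMod p × ZMod q))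

/-- The CRT sequence `s_g`: `s_g(t) = 1` iff `Φ_{p,q}(t) = (t mod p, t mod q) ∈ I_{g,p,q}`. -/
def crtSeq (p q : ℕ) (g : ZMod p) (t : ℕ) : ℕ :=
  if ((t : ZMod p), (t : ZMod q)) ∈ crtIdx p q g then 1 else 0

/-- Hamming correlation of two `L`-periodic sequences:
`H_{ab}(τ) = Σ_{t=0}^{L-1} a(t) b(t-τ)`, index `t-τ` computed mod `L`. -/
def hammingCorr (L : ℕ) (a b : ℕ → ℕ) (τ : ℕ) : ℕ :=
  ∑ t ∈ Finset.range L, a t * b ((t + L - τ % L) % L)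

/-- Two-dimensional Hamming cross-correlation
`H_{gh}(τ) = |I_{g,p,q} ∩ (I_{h,p,q} + τ)|` in `Z_p ⊕ Z_q`. -/
def H2 (p q : ℕ) (g h : ZMod p) (τ : ZMod p × ZMod q) : ℕ :=
  (crtIdx p q g ∩ (crtIdx p q h).image (fun x => x + τ)).card

/-- Distribution of the cross-correlation `H_{g1}` over all delay offsets. -/
def Ncross (p q : ℕ) (g : ZMod p) (j : ℕ) : ℕ :=
  ((Finset.range p ×ˢ Finset.range q).filter
    (fun τ => H2 p q g 1 ((τ.1 : ZMod p), (τ.2 : ZMod q)) = j)).card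

lemma aux_cast_mod (p n a : ℕ) (h : p ∣ n) : ((a % n : ℕ) : ZMod p) = (a : ZMod p) := by
  obtain ⟨c, rfl⟩ := h
  conv_rhs => rw [← Nat.mod_add_div a (p * c)]
  push_cast
  simp

lemma aux_s0 (p q : ℕ) (hq : 0 < q) (m : ℕ) :
    crtSeq p q 0 m = if (m : ZMod p) = 0 then 1 else 0 := by
  unfold crtSeq crtIdx
  congr 1
  simp only [Finset.mem_image, Finset.mem_range, zero_mul, Prod.mk.injEq, eq_iff_iff]
  constructor
  · rintro ⟨t, _, h1, _⟩; exact h1.symm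
  · intro h
    exact ⟨m % q, Nat.mod_lt _ hq, h.symm, by rw [ZMod.natCast_mod]⟩

lemma aux_s1 (p q : ℕ) (hp : 0 < p) (hq : 0 < q) (hco : Nat.Coprime p q) (t : ℕ)
    (ht : t < p * q) : crtSeq p q 1 t = if t < q then 1 else 0 := by
  unfold crtSeq crtIdx
  congr 1
  simp only [Finset.mem_image, Finset.mem_range, one_mul, Prod.mk.injEq, eq_iff_iff]
  constructor
  · rintro ⟨u, hu, h1, h2⟩
    rw [ZMod.natCast_eq_natCast_iff] at h1 h2
    have hmod : u ≡ t [MOD p * q] := (Nat.modEq_and_modEq_iff_modEq_mul hco).mp ⟨h1, h2⟩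
    unfold Nat.ModEq at hmod
    rw [Nat.mod_eq_of_lt (lt_of_lt_of_le hu (Nat.le_mul_of_pos_left q hp)),
        Nat.mod_eq_of_lt ht] at hmod
    omega
  · intro h
    exact ⟨t, h, rfl, rfl⟩

lemma aux_count (p q r : ℕ) (hp : 0 < p) (hr : r < p) :
    q / p ≤ ((Finset.range q).filter (fun t => t % p = r)).card ∧
    ((Finset.range q).filter (fun t => t % p = r)).card ≤ q / p + 1 := by
  constructor
  · have := Finset.card_le_card_of_injOn (f := fun k => p * k + r)
      (s := Finset.range (q / p))
      (t := (Finset.range q).filter (fun t => t % p = r))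
      (by
        intro k hk
        simp only [Finset.mem_coe, Finset.mem_range] at hk
        simp only [Finset.mem_coe, Finset.mem_filter, Finset.mem_range]
        constructor
        · have h1 : p * (k + 1) ≤ p * (q / p) := Nat.mul_le_mul_left p hk
          have h2 : q / p * p ≤ q := Nat.div_mul_le_self q p
          nlinarith
        · rw [Nat.mul_add_mod, Nat.mod_eq_of_lt hr])
      (by intro a _ b _ hab; dsimp only at hab; exact Nat.eq_of_mul_eq_mul_left hp (by omega))
    simpa using this
  · have := Finset.card_le_card_of_injOn (f := fun t => t / p)
      (s := (Finset.range q).filter (fun t => t % p = r))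
      (t := Finset.range (q / p + 1))
      (by
        intro t ht
        simp only [Finset.mem_coe, Finset.mem_filter, Finset.mem_range] at ht
        simp only [Finset.mem_coe, Finset.mem_range]
        exact Nat.lt_succ_of_le (Nat.div_le_div_right (le_of_lt ht.1)))
      (by
        intro a ha b hb hab
        simp only [Finset.coe_filter, Set.mem_setOf_eq, Finset.mem_range] at ha hb
        dsimp only at hab
        have h1 := Nat.div_add_mod a p
        have h2 := Nat.div_add_mod b p
        rw [hab, ha.2] at h1
        rw [hb.2] at h2
        generalize p * (b / p) = m at h1 h2
        omega)
    simpa using this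

theorem stmt4 (p q : ℕ) (hp : p.Prime) (hq : 0 < q) (hpq : ¬ p ∣ q)
    (τ : ℕ) (hτ : τ < p * q) :
    hammingCorr (p * q) (crtSeq p q 1) (crtSeq p q 0) τ = q / p ∨
    hammingCorr (p * q) (crtSeq p q 1) (crtSeq p q 0) τ = q / p + 1 := by
  have hp0 : 0 < p := hp.pos
  have hco : Nat.Coprime p q := (Nat.Prime.coprime_iff_not_dvd hp).mpr hpq
  have hmain : hammingCorr (p * q) (crtSeq p q 1) (crtSeq p q 0) τ
      = ((Finset.range q).filter (fun t => t % p = τ % p)).card := by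
    unfold hammingCorr
    rw [Nat.mod_eq_of_lt hτ]
    have hterm : ∀ t ∈ Finset.range (p * q),
        crtSeq p q 1 t * crtSeq p q 0 ((t + p * q - τ) % (p * q))
          = if t < q ∧ t % p = τ % p then 1 else 0 := by
      intro t ht
      simp only [Finset.mem_range] at ht
      rw [aux_s1 p q hp0 hq hco t ht, aux_s0 p q hq]
      have hcast : (((t + p * q - τ) % (p * q) : ℕ) : ZMod p) = ((t + p * q - τ : ℕ) : ZMod p) :=
        aux_cast_mod p (p * q) _ ⟨q, rfl⟩
      have hzero : ((((t + p * q - τ) % (p * q) : ℕ) : ZMod p) = 0) ↔ (t % p = τ % p) := by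
        rw [hcast]
        have hsub : (t + p * q - τ) + τ = t + p * q := by omega
        have hc : ((t + p * q - τ : ℕ) : ZMod p) + (τ : ZMod p) = (t : ZMod p) := by
          have h := congrArg (fun n : ℕ => (n : ZMod p)) hsub
          push_cast at h
          simpa using h
        rw [← ZMod.natCast_eq_natCast_iff']
        constructor
        · intro h
          rw [h, zero_add] at hc
          exact hc.symm
        · intro h
          rw [← h] at hc
          exact add_eq_right.mp hc
      simp only [hzero]
      by_cases h1 : t < q <;> by_cases h2 : t % p = τ % p <;> simp [h1, h2]
    rw [Finset.sum_congr rfl hterm, ← Finset.card_filter]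
    congr 1
    ext a
    simp only [Finset.mem_filter, Finset.mem_range]
    have hqle : q ≤ p * q := Nat.le_mul_of_pos_left q hp0
    constructor
    · rintro ⟨_, h⟩; exact ⟨h.1, h.2⟩
    · intro h; exact ⟨lt_of_lt_of_le h.1 hqle, h.1, h.2⟩
  obtain ⟨hlo, hhi⟩ := aux_count p q (τ % p) hp0 (Nat.mod_lt _ hp0)
  rw [hmain]
  omega
end

section
/- Let p be a prime and q a positive integer not divisible by p with q > p. Set m = ⌊q/p⌋ and let q̄ be the residue of q mod p. Let g ∈ Z_p with g ≠ 0 and g ≠ 1, and set b_g = (g−1)^{-1}·q̄ mod p. Then for every (τ1, τ2) ∈ Z_p ⊕ Z_q: if 0 < b_g < p − q̄ then m − 1 ≤ H_{g1}(τ1, τ2) ≤ m + 1, and if p − q̄ < b_g < p then m ≤ H_{g1}(τ1, τ2) ≤ m + 2. -/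
lemma succ_divmod' (p n : ℕ) (hp : 0 < p) :
    ((n+1) / p = if n % p + 1 = p then n/p + 1 else n/p) ∧
    ((n+1) % p = if n % p + 1 = p then 0 else n % p + 1) := by
  have hd := Nat.div_add_mod n p
  by_cases h : n % p + 1 = p
  · have h1 : n + 1 = p * (n/p + 1) := by
      have : p * (n/p + 1) = p * (n/p) + p := by ring
      omega
    simp only [h, if_true, h1, Nat.mul_div_cancel_left _ hp, Nat.mul_mod_right, and_self]
  · have hlt : n % p + 1 < p := by have := Nat.mod_lt n hp; omega
    have h1 : n + 1 = p * (n/p) + (n % p + 1) := by omega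
    rw [h1, Nat.mul_add_div hp, Nat.mul_add_mod, Nat.div_eq_of_lt hlt, Nat.mod_eq_of_lt hlt]
    simp [h]

lemma countLem' (p : ℕ) [NeZero p] (r : ZMod p) (n : ℕ) :
    ((Finset.range n).filter (fun t => ((t : ℕ) : ZMod p) = r)).card
      = n / p + if r.val < n % p then 1 else 0 := by
  have hp : 0 < p := Nat.pos_of_ne_zero (NeZero.ne p)
  induction n with
  | zero => simp
  | succ n ih =>
    have hmem : (((n : ℕ) : ZMod p) = r) ↔ n % p = r.val := by
      constructor
      · intro h; rw [← h, ZMod.val_natCast]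
      · intro h; rw [← ZMod.natCast_rightInverse r, ← h, ZMod.natCast_mod]
    obtain ⟨h1, h2⟩ := succ_divmod' p n hp
    rw [Finset.range_add_one, Finset.filter_insert, h1, h2]
    have hv := ZMod.val_lt r
    have hm := Nat.mod_lt n hp
    by_cases hc : ((n : ℕ) : ZMod p) = r
    · rw [if_pos hc, Finset.card_insert_of_notMem (by simp), ih]
      rw [hmem] at hc
      split_ifs <;> omega
    · rw [if_neg hc, ih]
      rw [hmem] at hc
      split_ifs <;> omega

theorem stmt5 (p q : ℕ) (hp : p.Prime) (hpq : ¬ p ∣ q) (hqp : p < q)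
    (g : ZMod p) (hg0 : g ≠ 0) (hg1 : g ≠ 1) (τ : ZMod p × ZMod q) :
    (0 < ((g - 1)⁻¹ * (q : ZMod p)).val ∧ ((g - 1)⁻¹ * (q : ZMod p)).val < p - q % p →
      q / p - 1 ≤ H2 p q g 1 τ ∧ H2 p q g 1 τ ≤ q / p + 1) ∧
    (p - q % p < ((g - 1)⁻¹ * (q : ZMod p)).val →
      q / p ≤ H2 p q g 1 τ ∧ H2 p q g 1 τ ≤ q / p + 2) := by
  haveI := Fact.mk hp
  haveI : NeZero p := ⟨hp.pos.ne'⟩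
  haveI : NeZero q := ⟨by omega⟩
  have hq : 0 < q := by omega
  set c := τ.2.val with hcdef
  have hcq : c < q := ZMod.val_lt τ.2
  have hτ2 : ((c : ℕ) : ZMod q) = τ.2 := ZMod.natCast_rightInverse τ.2
  set s' : ℕ → ℕ := fun t => if t < c then t + q - c else t - c with hs'def
  have hs'lt : ∀ t, t < q → s' t < q := by
    intro t ht; simp only [hs'def]; split_ifs <;> omega
  have hs'cast : ∀ t, t < q → ((s' t : ℕ) : ZMod q) = (t : ZMod q) - τ.2 := by
    intro t ht; simp only [hs'def]; split_ifs with h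
    · have h2 : (t + q - c : ℕ) = t + (q - c) := by omega
      rw [h2, Nat.cast_add, Nat.cast_sub hcq.le, ZMod.natCast_self, hτ2]; ring
    · rw [Nat.cast_sub (le_of_not_gt h), hτ2]
  -- Step A
  have hA : H2 p q g 1 τ = ((Finset.range q).filter (fun t : ℕ =>
      g * (t : ZMod p) = ((s' t : ℕ) : ZMod p) + τ.1)).card := by
    have hset : crtIdx p q g ∩ (crtIdx p q 1).image (fun x => x + τ)
        = ((Finset.range q).filter (fun t : ℕ =>
            g * (t : ZMod p) = ((s' t : ℕ) : ZMod p) + τ.1)).image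
          (fun t : ℕ => (g * (t : ZMod p), (t : ZMod q))) := by
      ext x
      simp only [crtIdx, Finset.mem_inter, Finset.mem_image, Finset.mem_filter,
        Finset.mem_range, one_mul]
      constructor
      · rintro ⟨⟨t, ht, rfl⟩, w, ⟨s, hs, rfl⟩, hw⟩
        have hw1 := congrArg Prod.fst hw
        have hw2 := congrArg Prod.snd hw
        simp only [Prod.fst_add, Prod.snd_add] at hw1 hw2
        have hsv : s = s' t := by
          have h1 : ((s : ℕ) : ZMod q) = (t : ZMod q) - τ.2 := by rw [← hw2]; ring
          rw [← hs'cast t ht] at h1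
          have h2 := congrArg ZMod.val h1
          rwa [ZMod.val_cast_of_lt hs, ZMod.val_cast_of_lt (hs'lt t ht)] at h2
        exact ⟨t, ⟨ht, by rw [← hw1, hsv]⟩, rfl⟩
      · rintro ⟨t, ⟨ht, hP⟩, rfl⟩
        refine ⟨⟨t, ht, rfl⟩, ((s' t : ZMod p), (s' t : ZMod q)), ⟨s' t, hs'lt t ht, rfl⟩, ?_⟩
        have h1 : ((s' t : ℕ) : ZMod p) + τ.1 = g * (t : ZMod p) := hP.symm
        have h2 : ((s' t : ℕ) : ZMod q) + τ.2 = (t : ZMod q) := by rw [hs'cast t ht]; ring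
        exact Prod.ext h1 h2
    rw [H2, hset, Finset.card_image_of_injOn]
    intro t ht t' ht' h
    simp only [Finset.coe_filter, Set.mem_setOf_eq, Finset.mem_range] at ht ht'
    have h2 := congrArg Prod.snd h
    simp only at h2
    have h3 := congrArg ZMod.val h2
    rwa [ZMod.val_cast_of_lt ht.1, ZMod.val_cast_of_lt ht'.1] at h3
  -- Step B
  set u := g - 1 with hudef
  have hu : u ≠ 0 := sub_ne_zero.mpr hg1
  set a := u⁻¹ * (τ.1 - (c : ZMod p)) with hadef
  set b := u⁻¹ * (q : ZMod p) with hbdef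
  have hB : ∀ t : ℕ, (g * (t : ZMod p) = ((s' t : ℕ) : ZMod p) + τ.1)
      ↔ (((t : ℕ) : ZMod p) = if t < c then a + b else a) := by
    intro t
    have hkey : ∀ x : ZMod p, (u * (t : ZMod p) = x) ↔ ((t : ZMod p) = u⁻¹ * x) := by
      intro x; constructor
      · intro h; rw [← h, inv_mul_cancel_left₀ hu]
      · intro h; rw [h, mul_inv_cancel_left₀ hu]
    have hgu : ∀ X : ZMod p, (g * (t : ZMod p) = X) ↔ (u * (t : ZMod p) = X - (t : ZMod p)) := by
      intro X
      have h1 : u * (t : ZMod p) = g * (t : ZMod p) - (t : ZMod p) := by rw [hudef]; ring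
      rw [h1, sub_left_inj]
    simp only [hs'def]
    split_ifs with h
    · rw [show ((t + q - c : ℕ) : ZMod p) = (t : ZMod p) + (q : ZMod p) - (c : ZMod p) by
        have h2 : (t + q - c : ℕ) = t + (q - c) := by omega
        rw [h2, Nat.cast_add, Nat.cast_sub hcq.le]; ring]
      rw [hgu, show ((t : ZMod p) + (q : ZMod p) - (c : ZMod p) + τ.1) - (t : ZMod p)
          = (τ.1 - (c : ZMod p)) + (q : ZMod p) by ring, hkey, mul_add, ← hadef, ← hbdef]
    · rw [show ((t - c : ℕ) : ZMod p) = (t : ZMod p) - (c : ZMod p) from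
        Nat.cast_sub (le_of_not_gt h)]
      rw [hgu, show ((t : ZMod p) - (c : ZMod p) + τ.1) - (t : ZMod p)
          = τ.1 - (c : ZMod p) by ring, hkey, ← hadef]
  rw [Finset.filter_congr (fun t _ => hB t)] at hA
  -- Step C : split the range
  have hsplit : Finset.range q = Finset.range c ∪ Finset.Ico c q := by
    simp only [Finset.range_eq_Ico]
    exact (Finset.Ico_union_Ico_eq_Ico (Nat.zero_le c) hcq.le).symm
  have hdisj : Disjoint (Finset.range c) (Finset.Ico c q) := by
    rw [Finset.disjoint_left]
    intro t ht ht'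
    simp only [Finset.mem_range] at ht
    simp only [Finset.mem_Ico] at ht'
    omega
  have e1 : ((Finset.range c).filter (fun t : ℕ => ((t : ℕ) : ZMod p) = if t < c then a + b else a)).card
      = ((Finset.range c).filter (fun t : ℕ => ((t : ℕ) : ZMod p) = a + b)).card := by
    congr 1
    apply Finset.filter_congr
    intro t ht
    rw [if_pos (Finset.mem_range.mp ht)]
  have e2 : ((Finset.Ico c q).filter (fun t : ℕ => ((t : ℕ) : ZMod p) = if t < c then a + b else a)).card
      = ((Finset.Ico c q).filter (fun t : ℕ => ((t : ℕ) : ZMod p) = a)).card := by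
    congr 1
    apply Finset.filter_congr
    intro t ht
    rw [if_neg (not_lt.mpr (Finset.mem_Ico.mp ht).1)]
  have e3 : ((Finset.range c).filter (fun t : ℕ => ((t : ℕ) : ZMod p) = a)).card
      + ((Finset.Ico c q).filter (fun t : ℕ => ((t : ℕ) : ZMod p) = a)).card
      = ((Finset.range q).filter (fun t : ℕ => ((t : ℕ) : ZMod p) = a)).card := by
    rw [hsplit, Finset.filter_union,
      Finset.card_union_of_disjoint (Finset.disjoint_filter_filter hdisj)]
  rw [hsplit, Finset.filter_union,
    Finset.card_union_of_disjoint (Finset.disjoint_filter_filter hdisj), e1, e2] at hA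
  -- combine into a single equation
  have hcard : H2 p q g 1 τ + ((Finset.range c).filter (fun t : ℕ => ((t : ℕ) : ZMod p) = a)).card
      = ((Finset.range c).filter (fun t : ℕ => ((t : ℕ) : ZMod p) = a + b)).card
      + ((Finset.range q).filter (fun t : ℕ => ((t : ℕ) : ZMod p) = a)).card := by
    rw [hA, ← e3]; ring
  rw [countLem' p (a+b) c, countLem' p a c, countLem' p a q] at hcard
  have hav : a.val < p := ZMod.val_lt a
  have hbv : b.val < p := ZMod.val_lt b
  have habv' : (a + b).val < p := ZMod.val_lt (a + b)
  have habv : (a + b).val = a.val + b.val ∨ (a + b).val + p = a.val + b.val := by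
    rw [ZMod.val_add]
    rcases lt_or_ge (a.val + b.val) p with h | h
    · left; rw [Nat.mod_eq_of_lt h]
    · right
      rw [Nat.mod_eq_sub_mod h, Nat.mod_eq_of_lt (by omega)]
      omega
  have hq0 : 0 < q % p := Nat.pos_of_ne_zero (fun h => hpq (Nat.dvd_of_mod_eq_zero h))
  have hqp' : q % p < p := Nat.mod_lt q hp.pos
  have hcp : c % p < p := Nat.mod_lt c hp.pos
  constructor
  · rintro ⟨h1, h2⟩
    split_ifs at hcard <;> omega
  · intro h1
    split_ifs at hcard <;> omega
end

section
/- Let p be a prime and q a positive integer not divisible by p with q > p. Set m = ⌊q/p⌋ and let q̄ be the residue of q mod p. Then N_0(m) = (p − q̄)·q and N_0(m+1) = q̄·q. -/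
lemma mem_crtIdx_zero {p q : ℕ} (hq : 0 < q) (x : ZMod p × ZMod q) :
    x ∈ crtIdx p q 0 ↔ x.1 = 0 := by
  haveI : NeZero q := ⟨hq.ne'⟩
  constructor
  · intro hx
    simp only [crtIdx, Finset.mem_image, Finset.mem_range] at hx
    obtain ⟨t, _, rfl⟩ := hx
    simp
  · intro h
    simp only [crtIdx, Finset.mem_image, Finset.mem_range]
    refine ⟨x.2.val, ZMod.val_lt _, ?_⟩
    have h2 : ((x.2.val : ℕ) : ZMod q) = x.2 := by rw [ZMod.natCast_val, ZMod.cast_id]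
    rw [Prod.ext_iff]
    exact ⟨by simp [h], h2⟩

lemma H2_zero_one {p q : ℕ} (hq : 0 < q) (τ1 τ2 : ℕ) :
    H2 p q 0 1 ((τ1 : ZMod p), (τ2 : ZMod q)) =
      ((Finset.range q).filter (fun t : ℕ => (t : ZMod p) = -(τ1 : ZMod p))).card := by
  haveI : NeZero q := ⟨hq.ne'⟩
  set g : ℕ → ZMod p × ZMod q :=
    fun t => ((t : ZMod p) + (τ1 : ZMod p), (t : ZMod q) + (τ2 : ZMod q)) with hg
  have hB : (crtIdx p q 1).image (fun x => x + ((τ1 : ZMod p), (τ2 : ZMod q)))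
      = (Finset.range q).image g := by
    rw [crtIdx, Finset.image_image]
    refine Finset.image_congr fun t _ => ?_
    simp [hg, Prod.ext_iff]
  have hinj : Set.InjOn g (Finset.range q) := by
    intro a ha b hb hab
    simp only [Finset.coe_range, Set.mem_Iio] at ha hb
    have h2 : (a : ZMod q) = (b : ZMod q) := by
      have := congrArg Prod.snd hab
      simpa [hg] using this
    have := congrArg ZMod.val h2
    rwa [ZMod.val_cast_of_lt ha, ZMod.val_cast_of_lt hb] at this
  unfold H2
  rw [hB]
  have hint : crtIdx p q 0 ∩ (Finset.range q).image g
      = ((Finset.range q).image g).filter (fun x => x.1 = 0) := by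
    ext x
    simp only [Finset.mem_inter, Finset.mem_filter, mem_crtIdx_zero hq]
    tauto
  rw [hint, Finset.filter_image, Finset.card_image_of_injOn
      (hinj.mono (by intro x hx; exact Finset.mem_coe.mpr (Finset.filter_subset _ _ hx)))]
  refine congrArg Finset.card (Finset.filter_congr fun t _ => ?_)
  simp only [hg, eq_iff_iff]
  constructor
  · intro h2; linear_combination (norm := ring_nf) h2
  · intro h2; linear_combination (norm := ring_nf) h2

lemma card_filter_cast_eq {p : ℕ} (hp : 0 < p) (q : ℕ) (c : ZMod p) :
    ((Finset.range q).filter (fun t : ℕ => (t : ZMod p) = c)).card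
      = q / p + if c.val < q % p then 1 else 0 := by
  haveI : NeZero p := ⟨hp.ne'⟩
  have hc : ((c.val : ℕ) : ZMod p) = c := by rw [ZMod.natCast_val, ZMod.cast_id]
  have h2 : ((Finset.range q).filter (fun t : ℕ => (t : ZMod p) = c))
      = (Finset.range q).filter (fun t : ℕ => t ≡ c.val [MOD p]) := by
    refine Finset.filter_congr fun t _ => ?_
    conv_lhs => rw [← hc]
    rw [ZMod.natCast_eq_natCast_iff]
  rw [h2, ← Nat.count_eq_card_filter_range, Nat.count_modEq_card _ hp,
    Nat.mod_eq_of_lt (ZMod.val_lt c)]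

lemma card_neg_val_lt {p : ℕ} (hp : 0 < p) (k : ℕ) (hk : k ≤ p) :
    ((Finset.range p).filter (fun a : ℕ => (-(a : ZMod p)).val < k)).card = k := by
  haveI : NeZero p := ⟨hp.ne'⟩
  have hval : ∀ b : ℕ, b < p → ((-(((-(b : ZMod p)).val : ℕ) : ZMod p)).val) = b := by
    intro b hb
    rw [ZMod.natCast_val, ZMod.cast_id, neg_neg, ZMod.val_cast_of_lt hb]
  have hcard : ((Finset.range p).filter (fun a : ℕ => (-(a : ZMod p)).val < k)).card
      = (Finset.range k).card := by
    refine Finset.card_bij' (fun a _ => (-(a : ZMod p)).val) (fun b _ => (-(b : ZMod p)).val)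
      ?_ ?_ ?_ ?_
    · intro a ha
      exact Finset.mem_range.mpr (Finset.mem_filter.mp ha).2
    · intro b hb
      have hb' : b < p := lt_of_lt_of_le (Finset.mem_range.mp hb) hk
      refine Finset.mem_filter.mpr ⟨Finset.mem_range.mpr (ZMod.val_lt _), ?_⟩
      rw [hval b hb']
      exact Finset.mem_range.mp hb
    · intro a ha
      exact hval a (Finset.mem_range.mp (Finset.mem_filter.mp ha).1)
    · intro b hb
      exact hval b (lt_of_lt_of_le (Finset.mem_range.mp hb) hk)
  rw [hcard, Finset.card_range]

theorem stmt6 (p q : ℕ) (hp : p.Prime) (hpq : ¬ p ∣ q) (hqp : p < q) :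
    Ncross p q 0 (q / p) = (p - q % p) * q ∧
    Ncross p q 0 (q / p + 1) = (q % p) * q := by
  have hp0 : 0 < p := hp.pos
  have hq0 : 0 < q := by omega
  haveI : NeZero p := ⟨hp0.ne'⟩
  have hkp : q % p < p := Nat.mod_lt _ hp0
  have hH : ∀ a b : ℕ, H2 p q 0 1 ((a : ZMod p), (b : ZMod q)) =
      q / p + if (-(a : ZMod p)).val < q % p then 1 else 0 := fun a b => by
    rw [H2_zero_one hq0, card_filter_cast_eq hp0]
  have key : ∀ j : ℕ, Ncross p q 0 j =
      ((Finset.range p).filter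
        (fun a : ℕ => q / p + (if (-(a : ZMod p)).val < q % p then 1 else 0) = j)).card * q := by
    intro j
    unfold Ncross
    have heq : ((Finset.range p ×ˢ Finset.range q).filter
        (fun τ => H2 p q 0 1 ((τ.1 : ZMod p), (τ.2 : ZMod q)) = j))
        = ((Finset.range p).filter
            (fun a : ℕ => q / p + (if (-(a : ZMod p)).val < q % p then 1 else 0) = j))
          ×ˢ Finset.range q := by
      ext ⟨a, b⟩
      simp only [Finset.mem_filter, Finset.mem_product, hH]
      tauto
    rw [heq, Finset.card_product, Finset.card_range]
  have hpos : ((Finset.range p).filter (fun a : ℕ => (-(a : ZMod p)).val < q % p)).card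
      = q % p := card_neg_val_lt hp0 _ hkp.le
  have hneg : ((Finset.range p).filter
      (fun a : ℕ => ¬ (-(a : ZMod p)).val < q % p)).card = p - q % p := by
    have htot := Finset.card_filter_add_card_filter_not
      (s := Finset.range p) (fun a : ℕ => (-(a : ZMod p)).val < q % p)
    rw [Finset.card_range, hpos] at htot
    omega
  constructor
  · rw [key]
    have : ((Finset.range p).filter
        (fun a : ℕ => q / p + (if (-(a : ZMod p)).val < q % p then 1 else 0) = q / p))
        = (Finset.range p).filter (fun a : ℕ => ¬ (-(a : ZMod p)).val < q % p) := by
      refine Finset.filter_congr fun a _ => ?_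
      split_ifs with h
      · exact ⟨fun h2 => absurd h2 (by omega), fun h2 => absurd h h2⟩
      · exact ⟨fun _ => h, fun _ => by omega⟩
    rw [this, hneg]
  · rw [key]
    have : ((Finset.range p).filter
        (fun a : ℕ => q / p + (if (-(a : ZMod p)).val < q % p then 1 else 0) = q / p + 1))
        = (Finset.range p).filter (fun a : ℕ => (-(a : ZMod p)).val < q % p) := by
      refine Finset.filter_congr fun a _ => ?_
      split_ifs with h
      · exact ⟨fun _ => h, fun _ => rfl⟩
      · exact ⟨fun h2 => absurd h2 (by omega), fun h2 => absurd h2 h⟩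
    rw [this, hpos]
end

section
/- Let p be a prime and q a positive integer not divisible by p with q > p. Set m = ⌊q/p⌋, let q̄ be the residue of q mod p, let g ∈ Z_p with g ≠ 0 and g ≠ 1, and set b_g = (g−1)^{-1}·q̄ mod p. If 0 < b_g < p − q̄, then with η = m·b_g·(p − b_g − q̄): N_g(m−1) = η, N_g(m) = q(p − q̄) − 2η, and N_g(m+1) = q·q̄ + η. -/
lemma cnt_range (p : ℕ) (hp : 1 < p) (c : ℕ) (hc : c < p) (N : ℕ) :
    ((Finset.range N).filter (fun t => t % p = c)).card
      = N / p + if c < N % p then 1 else 0 := by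
  induction N with
  | zero => simp
  | succ n ih =>
    rw [Finset.range_add_one, Finset.filter_insert, Nat.succ_div]
    have h1 : 1 % p = 1 := Nat.mod_eq_of_lt hp
    have hnlt : n % p < p := Nat.mod_lt n (by omega)
    have hmodsucc : (n+1) % p = (n % p + 1) % p := by
      conv_lhs => rw [Nat.add_mod, h1]
    by_cases hd : p ∣ (n+1)
    · have h0 : (n+1) % p = 0 := Nat.mod_eq_zero_of_dvd hd
      have hnp : n % p = p - 1 := by
        rcases Nat.lt_or_ge (n % p + 1) p with h | h
        · rw [Nat.mod_eq_of_lt h] at hmodsucc; omega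
        · omega
      rw [if_pos hd, h0]
      by_cases hc' : n % p = c
      · rw [if_pos hc', Finset.card_insert_of_notMem (by simp), ih]
        split_ifs <;> omega
      · rw [if_neg hc', ih]
        split_ifs <;> omega
    · have h0 : (n+1) % p = n % p + 1 := by
        rcases Nat.lt_or_ge (n % p + 1) p with h | h
        · rw [Nat.mod_eq_of_lt h] at hmodsucc; omega
        · exfalso
          have h2 : n % p + 1 = p := by omega
          rw [h2, Nat.mod_self] at hmodsucc
          exact hd (Nat.dvd_of_mod_eq_zero hmodsucc)
      rw [if_neg hd, h0]
      by_cases hc' : n % p = c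
      · rw [if_pos hc', Finset.card_insert_of_notMem (by simp), ih]
        split_ifs <;> omega
      · rw [if_neg hc', ih]
        split_ifs <;> omega


lemma H2_eq (p q : ℕ) (hq : 0 < q) (g : ZMod p) (x0 y0 : ℕ) (hy0 : y0 < q) :
    H2 p q g 1 ((x0 : ZMod p), (y0 : ZMod q)) =
      ((Finset.range q).filter
        (fun t : ℕ => (g * (t : ZMod p) : ZMod p) = (((t + q - y0) % q : ℕ) : ZMod p) + (x0 : ZMod p))).card := by
  haveI : NeZero q := ⟨hq.ne'⟩
  have hinj : Set.InjOn (fun t : ℕ => ((g * (t : ZMod p), (t : ZMod q)) : ZMod p × ZMod q))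
      (Finset.range q) := by
    intro t1 h1 t2 h2 he
    simp only [Finset.coe_range, Set.mem_Iio] at h1 h2
    have : (t1 : ZMod q) = (t2 : ZMod q) := congrArg Prod.snd he
    have := congrArg ZMod.val this
    rwa [ZMod.val_natCast, ZMod.val_natCast, Nat.mod_eq_of_lt h1, Nat.mod_eq_of_lt h2] at this
  have hkey : ∀ t : ℕ, t < q →
      ((((t + q - y0) % q : ℕ) : ZMod q)) + (y0 : ZMod q) = (t : ZMod q) := by
    intro t ht
    rw [ZMod.natCast_mod, Nat.cast_sub (by omega : y0 ≤ t + q)]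
    push_cast [ZMod.natCast_self]
    ring
  unfold H2
  rw [← Finset.filter_mem_eq_inter]
  unfold crtIdx
  rw [Finset.filter_image]
  rw [Finset.card_image_of_injOn (Set.InjOn.mono (Finset.filter_subset _ _) hinj)]
  congr 1
  apply Finset.filter_congr
  intro t ht
  simp only [Finset.mem_range] at ht
  simp only [Finset.mem_image, Finset.mem_range, one_mul, Prod.ext_iff, Prod.fst_add,
    Prod.snd_add, Prod.mk.injEq]
  constructor
  · rintro ⟨w, ⟨s, hs, hw1, hw2⟩, he1, he2⟩
    rw [← hw1] at he1
    rw [← hw2] at he2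
    have hs0 : s = (t + q - y0) % q := by
      have hcast : (((t + q - y0) % q : ℕ) : ZMod q) = (s : ZMod q) := by
        have := hkey t ht
        rw [← he2] at this
        exact add_right_cancel this
      have := congrArg ZMod.val hcast
      rw [ZMod.val_natCast, ZMod.val_natCast,
        Nat.mod_eq_of_lt (Nat.mod_lt _ hq), Nat.mod_eq_of_lt hs] at this
      omega
    rw [← hs0] at *
    rw [← he1]
  · intro h
    exact ⟨((((t + q - y0) % q : ℕ) : ZMod p), (((t + q - y0) % q : ℕ) : ZMod q)),
      ⟨(t + q - y0) % q, Nat.mod_lt _ hq, rfl, rfl⟩, h.symm, hkey t ht⟩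

lemma cast_eq_iff (p : ℕ) [NeZero p] (t : ℕ) (z : ZMod p) :
    (t : ZMod p) = z ↔ t % p = z.val := by
  constructor
  · intro h; rw [← h, ZMod.val_natCast]
  · intro h
    have : ((t % p : ℕ) : ZMod p) = (z.val : ZMod p) := by rw [h]
    rwa [ZMod.natCast_mod, ZMod.natCast_val, ZMod.cast_id] at this

lemma H2_split (p q : ℕ) (hp : p.Prime) (g : ZMod p) (hg1 : g ≠ 1)
    (x0 y0 : ℕ) (hy0 : y0 < q) :
    H2 p q g 1 ((x0 : ZMod p), (y0 : ZMod q)) =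
      ((Finset.Ico y0 q).filter
        (fun t => t % p = ((g-1)⁻¹ * ((x0 : ZMod p) - (y0 : ZMod p))).val)).card +
      ((Finset.range y0).filter
        (fun t => t % p = (((g-1)⁻¹ * ((x0 : ZMod p) - (y0 : ZMod p))).val
            + ((g-1)⁻¹ * (q : ZMod p)).val) % p)).card := by
  haveI := Fact.mk hp
  have hg : g - 1 ≠ 0 := sub_ne_zero.mpr hg1
  set u := (g-1)⁻¹ with hu
  set a := (u * ((x0 : ZMod p) - (y0 : ZMod p))).val with ha
  set b := (u * (q : ZMod p)).val with hbdef
  rw [H2_eq p q (by omega) g x0 y0 hy0]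
  have hsplit : Finset.range q = Finset.range y0 ∪ Finset.Ico y0 q := by
    rw [Finset.range_eq_Ico, Finset.range_eq_Ico]
    exact (Finset.Ico_union_Ico_eq_Ico (Nat.zero_le y0) hy0.le).symm
  have hdisj : Disjoint (Finset.range y0) (Finset.Ico y0 q) := by
    rw [Finset.range_eq_Ico]; exact Finset.Ico_disjoint_Ico_consecutive 0 y0 q
  rw [hsplit, Finset.filter_union, Finset.card_union_of_disjoint
    (Finset.disjoint_filter_filter hdisj)]
  rw [add_comm]
  congr 1
  · refine congrArg Finset.card (Finset.filter_congr ?_)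
    intro t ht
    simp only [Finset.mem_Ico] at ht
    have h1 : (t + q - y0) % q = t - y0 := by
      have : t + q - y0 = (t - y0) + q := by omega
      rw [this, Nat.add_mod_right, Nat.mod_eq_of_lt (by omega)]
    rw [h1, Nat.cast_sub ht.1]
    have h2 : (g * (t : ZMod p) = (t : ZMod p) - (y0 : ZMod p) + (x0 : ZMod p))
        ↔ (t : ZMod p) = u * ((x0 : ZMod p) - (y0 : ZMod p)) := by
      rw [hu, eq_inv_mul_iff_mul_eq₀ hg]
      constructor <;> intro h <;> linear_combination h
    rw [h2, cast_eq_iff, ← ha]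
  · refine congrArg Finset.card (Finset.filter_congr ?_)
    intro t ht
    simp only [Finset.mem_range] at ht
    have h1 : (t + q - y0) % q = t + q - y0 := Nat.mod_eq_of_lt (by omega)
    rw [h1, Nat.cast_sub (by omega : y0 ≤ t + q)]
    push_cast
    have h2 : (g * (t : ZMod p) = (t : ZMod p) + (q : ZMod p) - (y0 : ZMod p) + (x0 : ZMod p))
        ↔ (t : ZMod p) = u * ((x0 : ZMod p) - (y0 : ZMod p)) + u * (q : ZMod p) := by
      rw [hu]
      rw [show (g-1)⁻¹ * ((x0 : ZMod p) - (y0 : ZMod p)) + (g-1)⁻¹ * (q : ZMod p)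
          = (g-1)⁻¹ * (((x0 : ZMod p) - (y0 : ZMod p)) + (q : ZMod p)) by ring]
      rw [eq_inv_mul_iff_mul_eq₀ hg]
      constructor <;> intro h <;> linear_combination h
    rw [h2, cast_eq_iff]
    have h3 : (u * ((x0 : ZMod p) - (y0 : ZMod p)) + u * (q : ZMod p)).val = (a + b) % p := by
      have : u * ((x0 : ZMod p) - (y0 : ZMod p)) + u * (q : ZMod p)
          = ((a + b : ℕ) : ZMod p) := by
        push_cast [ha, hbdef, ZMod.natCast_val, ZMod.cast_id]
        rfl
      rw [this, ZMod.val_natCast]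
    rw [h3]

lemma Ekey (p q : ℕ) (hp : p.Prime) (hqp : p < q) (g : ZMod p) (hg1 : g ≠ 1)
    (x0 y0 : ℕ) (hy0 : y0 < q) :
    H2 p q g 1 ((x0 : ZMod p), (y0 : ZMod q))
      + (if ((g-1)⁻¹ * ((x0 : ZMod p) - (y0 : ZMod p))).val < y0 % p then 1 else 0)
    = q / p + (if ((g-1)⁻¹ * ((x0 : ZMod p) - (y0 : ZMod p))).val < q % p then 1 else 0)
      + (if (((g-1)⁻¹ * ((x0 : ZMod p) - (y0 : ZMod p))).val
            + ((g-1)⁻¹ * (q : ZMod p)).val) % p < y0 % p then 1 else 0) := by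
  haveI := Fact.mk hp
  have hp1 : 1 < p := hp.one_lt
  rw [H2_split p q hp g hg1 x0 y0 hy0]
  set a := ((g-1)⁻¹ * ((x0 : ZMod p) - (y0 : ZMod p))).val with ha
  set b := ((g-1)⁻¹ * (q : ZMod p)).val with hb
  have halt : a < p := ZMod.val_lt _
  have hclt : (a + b) % p < p := Nat.mod_lt _ (by omega)
  have hsplit : Finset.range q = Finset.range y0 ∪ Finset.Ico y0 q := by
    rw [Finset.range_eq_Ico, Finset.range_eq_Ico]
    exact (Finset.Ico_union_Ico_eq_Ico (Nat.zero_le y0) hy0.le).symm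
  have hdisj : Disjoint (Finset.range y0) (Finset.Ico y0 q) := by
    rw [Finset.range_eq_Ico]; exact Finset.Ico_disjoint_Ico_consecutive 0 y0 q
  have hIco : ((Finset.range q).filter (fun t => t % p = a)).card
      = ((Finset.range y0).filter (fun t => t % p = a)).card
        + ((Finset.Ico y0 q).filter (fun t => t % p = a)).card := by
    rw [hsplit, Finset.filter_union,
      Finset.card_union_of_disjoint (Finset.disjoint_filter_filter hdisj)]
  rw [cnt_range p hp1 a halt q, cnt_range p hp1 a halt y0] at hIco
  rw [cnt_range p hp1 ((a+b)%p) hclt y0]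
  omega

lemma shift_bij_sum {M : Type*} [AddCommMonoid M] (p b : ℕ) (hp : 0 < p) (hb : b ≤ p)
    (f : ℕ → M) :
    ∑ a ∈ Finset.range p, f ((a + b) % p) = ∑ c ∈ Finset.range p, f c := by
  apply Finset.sum_nbij' (fun a => (a + b) % p) (fun c => (c + (p - b)) % p)
  · intro a ha; exact Finset.mem_range.mpr (Nat.mod_lt _ hp)
  · intro c hc; exact Finset.mem_range.mpr (Nat.mod_lt _ hp)
  · intro a ha
    simp only [Finset.mem_range] at ha
    rw [Nat.mod_add_mod, show a + b + (p - b) = a + p by omega, Nat.add_mod_right,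
      Nat.mod_eq_of_lt ha]
  · intro c hc
    simp only [Finset.mem_range] at hc
    rw [Nat.mod_add_mod, show c + (p - b) + b = c + p by omega, Nat.add_mod_right,
      Nat.mod_eq_of_lt hc]
  · intro a ha; rfl

lemma mod2cases (p x : ℕ) (hp : 0 < p) (hx : x < 2 * p) :
    x % p = x ∨ x % p + p = x := by
  rcases Nat.lt_or_ge x p with h | h
  · left; exact Nat.mod_eq_of_lt h
  · right
    rw [Nat.mod_eq_sub_mod h, Nat.mod_eq_of_lt (by omega)]
    omega

/-- the class predicate -/
def Pcl (p r b m j s a : ℕ) : Prop :=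
  j + (if a < s then 1 else 0)
    = m + (if a < r then 1 else 0) + (if (a + b) % p < s then 1 else 0)

instance (p r b m j s a : ℕ) : Decidable (Pcl p r b m j s a) := by
  unfold Pcl; infer_instance

def ncl (p r b m j s : ℕ) : ℕ := ((Finset.range p).filter (Pcl p r b m j s)).card

section Arith
variable (p r b m : ℕ)
variable (hr0 : 0 < r) (hrp : r < p) (hb0 : 0 < b) (hbr : b + r < p) (hm : 1 ≤ m)

include hr0 hrp hb0 hbr hm in
lemma L1 (s : ℕ) :
    ncl p r b m (m-1) s + ncl p r b m m s + ncl p r b m (m+1) s = p := by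
  unfold ncl
  rw [Finset.card_filter, Finset.card_filter, Finset.card_filter,
    ← Finset.sum_add_distrib, ← Finset.sum_add_distrib]
  calc _ = ∑ _a ∈ Finset.range p, 1 := by
            apply Finset.sum_congr rfl
            intro a ha
            simp only [Finset.mem_range] at ha
            have hc := mod2cases p (a + b) (by omega) (by omega)
            unfold Pcl
            split_ifs <;> omega
    _ = p := by simp

include hr0 hrp hb0 hbr hm in
lemma L2 (s : ℕ) (hs : s < p) :
    ncl p r b m (m+1) s = ncl p r b m (m-1) s + r := by
  have key : (ncl p r b m (m+1) s : ℤ) - (ncl p r b m (m-1) s : ℤ) = r := by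
    have h1 : ∀ a ∈ Finset.range p,
        ((if Pcl p r b m (m+1) s a then (1:ℤ) else 0) - (if Pcl p r b m (m-1) s a then (1:ℤ) else 0))
        = ((if a < r then (1:ℤ) else 0) + (if (a + b) % p < s then (1:ℤ) else 0)
            - (if a < s then (1:ℤ) else 0)) := by
      intro a ha
      simp only [Finset.mem_range] at ha
      have hc := mod2cases p (a + b) (by omega) (by omega)
      have hlt : (a + b) % p < p := Nat.mod_lt _ (by omega)
      unfold Pcl
      split_ifs <;> omega
    have h2 : ∑ a ∈ Finset.range p,
        ((if Pcl p r b m (m+1) s a then (1:ℤ) else 0) - (if Pcl p r b m (m-1) s a then (1:ℤ) else 0))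
        = (ncl p r b m (m+1) s : ℤ) - (ncl p r b m (m-1) s : ℤ) := by
      rw [Finset.sum_sub_distrib, Finset.sum_boole, Finset.sum_boole]
      rfl
    rw [← h2, Finset.sum_congr rfl h1, Finset.sum_sub_distrib, Finset.sum_add_distrib]
    have e1 : ∑ a ∈ Finset.range p, (if a < r then (1:ℤ) else 0) = r := by
      rw [Finset.sum_boole]
      congr 1
      rw [show (Finset.range p).filter (fun a => a < r) = Finset.range r from by
        ext x; simp only [Finset.mem_filter, Finset.mem_range]; omega]
      exact Finset.card_range r
    have e2 : ∑ a ∈ Finset.range p, (if a < s then (1:ℤ) else 0) = s := by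
      rw [Finset.sum_boole]
      congr 1
      rw [show (Finset.range p).filter (fun a => a < s) = Finset.range s from by
        ext x; simp only [Finset.mem_filter, Finset.mem_range]; omega]
      exact Finset.card_range s
    have e3 : ∑ a ∈ Finset.range p, (if (a + b) % p < s then (1:ℤ) else 0) = s := by
      rw [shift_bij_sum p b (by omega) (by omega) (fun c => if c < s then (1:ℤ) else 0)]
      exact e2
    rw [e1, e2, e3]; ring
  omega

include hm in
lemma L4 (s : ℕ) (hs : s ≤ r) : ncl p r b m (m-1) s = 0 := by
  unfold ncl
  rw [Finset.card_eq_zero, Finset.filter_eq_empty_iff]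
  intro a ha hP
  unfold Pcl at hP
  split_ifs at hP <;> omega

include hr0 hrp hb0 hbr hm in
lemma L3 : ∑ s ∈ Finset.range p, ncl p r b m (m-1) s = b * (p - b - r) := by
  unfold ncl
  have hrw : ∀ s ∈ Finset.range p, ((Finset.range p).filter (Pcl p r b m (m-1) s)).card
      = ∑ a ∈ Finset.range p, (if r ≤ a ∧ a < s ∧ s ≤ (a + b) % p then 1 else 0) := by
    intro s _
    rw [Finset.card_filter]
    apply Finset.sum_congr rfl
    intro a _
    unfold Pcl
    split_ifs <;> omega
  rw [Finset.sum_congr rfl hrw, Finset.sum_comm]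
  have hinner : ∀ a ∈ Finset.range p,
      (∑ s ∈ Finset.range p, if r ≤ a ∧ a < s ∧ s ≤ (a + b) % p then 1 else 0)
      = if r ≤ a ∧ a < p - b then b else 0 := by
    intro a ha
    simp only [Finset.mem_range] at ha
    by_cases h1 : r ≤ a
    · by_cases h2 : a < p - b
      · have hab : (a + b) % p = a + b := Nat.mod_eq_of_lt (by omega)
        rw [if_pos ⟨h1, h2⟩, ← Finset.card_filter]
        rw [show (Finset.range p).filter (fun s => r ≤ a ∧ a < s ∧ s ≤ (a + b) % p)
            = Finset.Ico (a+1) (a+b+1) from by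
          ext x
          simp only [Finset.mem_filter, Finset.mem_range, Finset.mem_Ico, hab]
          omega]
        rw [Nat.card_Ico]
        omega
      · have hc := mod2cases p (a + b) (by omega) (by omega)
        have hlt : (a + b) % p < p := Nat.mod_lt _ (by omega)
        rw [if_neg (by omega)]
        apply Finset.sum_eq_zero
        intro s _
        exact if_neg (by omega)
    · rw [if_neg (by omega)]
      apply Finset.sum_eq_zero
      intro s _
      exact if_neg (by omega)
  rw [Finset.sum_congr rfl hinner, ← Finset.sum_filter]
  rw [show (Finset.range p).filter (fun a => r ≤ a ∧ a < p - b) = Finset.Ico r (p-b) from by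
    ext x
    simp only [Finset.mem_filter, Finset.mem_range, Finset.mem_Ico]
    omega]
  rw [Finset.sum_const, Nat.card_Ico, smul_eq_mul]
  exact Nat.mul_comm _ _
end Arith

lemma group_sum (p q : ℕ) (hp1 : 1 < p) (f : ℕ → ℕ) :
    ∑ y0 ∈ Finset.range q, f (y0 % p) =
      ∑ s ∈ Finset.range p, (q / p + if s < q % p then 1 else 0) * f s := by
  rw [← Finset.sum_fiberwise_of_maps_to' (g := fun y => y % p) (t := Finset.range p)
      (fun y _ => Finset.mem_range.mpr (Nat.mod_lt _ (by omega))) f]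
  apply Finset.sum_congr rfl
  intro s hs
  simp only [Finset.mem_range] at hs
  rw [Finset.sum_const, cnt_range p hp1 s hs q, smul_eq_mul]

lemma reindex (p : ℕ) (hp : p.Prime) (g : ZMod p) (hg1 : g ≠ 1) (y0 : ℕ) (f : ℕ → ℕ) :
    ∑ x0 ∈ Finset.range p, f (((g-1)⁻¹ * ((x0 : ZMod p) - (y0 : ZMod p))).val)
      = ∑ a ∈ Finset.range p, f a := by
  haveI := Fact.mk hp
  have hg : g - 1 ≠ 0 := sub_ne_zero.mpr hg1
  refine Finset.sum_nbij' (fun x0 => ((g-1)⁻¹ * ((x0 : ZMod p) - (y0 : ZMod p))).val)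
    (fun a => ((g-1) * (a : ZMod p) + (y0 : ZMod p)).val) ?_ ?_ ?_ ?_ ?_
  · intro x0 _; exact Finset.mem_range.mpr (ZMod.val_lt _)
  · intro a _; exact Finset.mem_range.mpr (ZMod.val_lt _)
  · intro x0 hx0
    simp only [Finset.mem_range] at hx0
    rw [ZMod.natCast_val, ZMod.cast_id]
    rw [show (g-1) * ((g-1)⁻¹ * ((x0 : ZMod p) - (y0 : ZMod p))) + (y0 : ZMod p)
        = (g-1) * (g-1)⁻¹ * ((x0 : ZMod p) - (y0 : ZMod p)) + (y0 : ZMod p) by ring,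
      mul_inv_cancel₀ hg, one_mul, sub_add_cancel, ZMod.val_natCast, Nat.mod_eq_of_lt hx0]
  · intro a ha
    simp only [Finset.mem_range] at ha
    rw [ZMod.natCast_val, ZMod.cast_id, add_sub_cancel_right,
      show (g-1)⁻¹ * ((g-1) * (a : ZMod p)) = (g-1)⁻¹ * (g-1) * (a : ZMod p) by ring,
      inv_mul_cancel₀ hg, one_mul, ZMod.val_natCast, Nat.mod_eq_of_lt ha]
  · intro x0 _; rfl


theorem stmt7 (p q : ℕ) (hp : p.Prime) (hpq : ¬ p ∣ q) (hqp : p < q)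
    (g : ZMod p) (hg0 : g ≠ 0) (hg1 : g ≠ 1)
    (hb : 0 < ((g - 1)⁻¹ * (q : ZMod p)).val ∧
          ((g - 1)⁻¹ * (q : ZMod p)).val < p - q % p) :
    Ncross p q g (q / p - 1) =
      (q / p) * ((g - 1)⁻¹ * (q : ZMod p)).val *
        (p - ((g - 1)⁻¹ * (q : ZMod p)).val - q % p) ∧
    Ncross p q g (q / p) =
      q * (p - q % p) -
        2 * ((q / p) * ((g - 1)⁻¹ * (q : ZMod p)).val *
          (p - ((g - 1)⁻¹ * (q : ZMod p)).val - q % p)) ∧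
    Ncross p q g (q / p + 1) =
      q * (q % p) +
        (q / p) * ((g - 1)⁻¹ * (q : ZMod p)).val *
          (p - ((g - 1)⁻¹ * (q : ZMod p)).val - q % p) := by
  haveI := Fact.mk hp
  have hp1 : 1 < p := hp.one_lt
  set b := ((g - 1)⁻¹ * (q : ZMod p)).val with hbdef
  have hr0 : 0 < q % p := Nat.pos_of_ne_zero (fun h => hpq (Nat.dvd_of_mod_eq_zero h))
  have hrp : q % p < p := Nat.mod_lt _ (by omega)
  have hm : 1 ≤ q / p := (Nat.one_le_div_iff (by omega)).mpr hqp.le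
  have hbp : b < p := ZMod.val_lt _
  have hb0 : 0 < b := hb.1
  have hbr : b + q % p < p := by have := hb.2; omega
  -- Ncross in terms of class counts
  have hNc : ∀ j : ℕ, Ncross p q g j
      = ∑ s ∈ Finset.range p,
          (q / p + if s < q % p then 1 else 0) * ncl p (q % p) b (q / p) j s := by
    intro j
    unfold Ncross
    rw [Finset.card_filter, Finset.sum_product, Finset.sum_comm]
    have hy : ∀ y0 ∈ Finset.range q,
        (∑ x0 ∈ Finset.range p,
          if H2 p q g 1 ((x0 : ZMod p), (y0 : ZMod q)) = j then 1 else 0)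
        = ncl p (q % p) b (q / p) j (y0 % p) := by
      intro y0 hy0
      simp only [Finset.mem_range] at hy0
      have step1 : ∀ x0 ∈ Finset.range p,
          (if H2 p q g 1 ((x0 : ZMod p), (y0 : ZMod q)) = j then 1 else 0)
          = (fun a => if Pcl p (q % p) b (q / p) j (y0 % p) a then 1 else 0)
              (((g-1)⁻¹ * ((x0 : ZMod p) - (y0 : ZMod p))).val) := by
        intro x0 _
        have hE := Ekey p q hp hqp g hg1 x0 y0 hy0
        simp only
        unfold Pcl
        rw [← hbdef] at hE
        split_ifs at hE ⊢ <;> omega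
      rw [Finset.sum_congr rfl step1,
        reindex p hp g hg1 y0 (fun a => if Pcl p (q % p) b (q / p) j (y0 % p) a then 1 else 0)]
      exact (Finset.card_filter _ _).symm
    rw [Finset.sum_congr rfl hy]
    exact group_sum p q hp1 _
  -- weight sum
  have hW : ∑ s ∈ Finset.range p, (q / p + if s < q % p then 1 else 0) = q := by
    rw [Finset.sum_add_distrib, Finset.sum_const, Finset.card_range, smul_eq_mul]
    have h2 : ∑ s ∈ Finset.range p, (if s < q % p then 1 else 0) = q % p := by
      rw [← Finset.card_filter]
      rw [show (Finset.range p).filter (fun s => s < q % p) = Finset.range (q % p) from by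
        ext x; simp only [Finset.mem_filter, Finset.mem_range]; omega]
      exact Finset.card_range _
    rw [h2]
    have := Nat.div_add_mod q p
    omega
  -- eta sum
  have hEta : ∑ s ∈ Finset.range p,
      (q / p + if s < q % p then 1 else 0) * ncl p (q % p) b (q / p) (q / p - 1) s
      = q / p * b * (p - b - q % p) := by
    have hsplit : ∀ s ∈ Finset.range p,
        (q / p + if s < q % p then 1 else 0) * ncl p (q % p) b (q / p) (q / p - 1) s
        = q / p * ncl p (q % p) b (q / p) (q / p - 1) s
          + (if s < q % p then 1 else 0) * ncl p (q % p) b (q / p) (q / p - 1) s := by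
      intro s _; rw [add_mul]
    rw [Finset.sum_congr rfl hsplit, Finset.sum_add_distrib]
    have h1 : ∑ s ∈ Finset.range p, q / p * ncl p (q % p) b (q / p) (q / p - 1) s
        = q / p * (b * (p - b - q % p)) := by
      rw [← Finset.mul_sum, L3 p (q % p) b (q / p) hr0 hrp hb0 hbr hm]
    have h2 : ∑ s ∈ Finset.range p,
        (if s < q % p then 1 else 0) * ncl p (q % p) b (q / p) (q / p - 1) s = 0 := by
      apply Finset.sum_eq_zero
      intro s _
      by_cases h : s < q % p
      · rw [L4 p (q % p) b (q / p) hm s h.le, mul_zero]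
      · rw [if_neg h, zero_mul]
    rw [h1, h2, add_zero, mul_assoc]
  refine ⟨?_, ?_, ?_⟩
  · rw [hNc (q / p - 1)]
    exact hEta
  · have hkey : Ncross p q g (q / p) + 2 * (q / p * b * (p - b - q % p))
        = q * (p - q % p) := by
      rw [hNc (q / p), ← hEta, Finset.mul_sum, ← Finset.sum_add_distrib]
      have hsplit : ∀ s ∈ Finset.range p,
          (q / p + if s < q % p then 1 else 0) * ncl p (q % p) b (q / p) (q / p) s
            + 2 * ((q / p + if s < q % p then 1 else 0) * ncl p (q % p) b (q / p) (q / p - 1) s)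
          = (q / p + if s < q % p then 1 else 0) * (p - q % p) := by
        intro s hs
        have l1 := L1 p (q % p) b (q / p) hr0 hrp hb0 hbr hm s
        have l2 := L2 p (q % p) b (q / p) hr0 hrp hb0 hbr hm s (Finset.mem_range.mp hs)
        have hn : ncl p (q % p) b (q / p) (q / p) s
            + 2 * ncl p (q % p) b (q / p) (q / p - 1) s = p - q % p := by omega
        rw [show 2 * ((q / p + if s < q % p then 1 else 0) * ncl p (q % p) b (q / p) (q / p - 1) s)
            = (q / p + if s < q % p then 1 else 0) * (2 * ncl p (q % p) b (q / p) (q / p - 1) s) by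
          ring, ← mul_add, hn]
      rw [Finset.sum_congr rfl hsplit, ← Finset.sum_mul, hW]
    omega
  · rw [hNc (q / p + 1)]
    have hsplit : ∀ s ∈ Finset.range p,
        (q / p + if s < q % p then 1 else 0) * ncl p (q % p) b (q / p) (q / p + 1) s
        = (q / p + if s < q % p then 1 else 0) * ncl p (q % p) b (q / p) (q / p - 1) s
          + (q / p + if s < q % p then 1 else 0) * (q % p) := by
      intro s hs
      rw [L2 p (q % p) b (q / p) hr0 hrp hb0 hbr hm s (Finset.mem_range.mp hs), mul_add]
    rw [Finset.sum_congr rfl hsplit, Finset.sum_add_distrib, hEta, ← Finset.sum_mul, hW]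
    omega
end

section
/- Let p be a prime and q a positive integer not divisible by p with q > p. Set m = ⌊q/p⌋, let q̄ be the residue of q mod p, let g ∈ Z_p with g ≠ 0 and g ≠ 1, and set b_g = (g−1)^{-1}·q̄ mod p. If p − q̄ < b_g < p, then with θ = (m+1)·(p − b_g)·(q̄ + b_g − p): N_g(m) = q(p − q̄) + θ, N_g(m+1) = q·q̄ − 2θ, and N_g(m+2) = θ. -/
def cnt (p a x : ℕ) : ℕ := ((Finset.range x).filter fun t => t % p = a).card

lemma cnt_eq (p : ℕ) (hp : 1 < p) (a : ℕ) (ha : a < p) (x : ℕ) :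
    cnt p a x = x / p + if a < x % p then 1 else 0 := by
  induction x with
  | zero => simp [cnt]
  | succ n ih =>
    have hm : n % p < p := Nat.mod_lt n (by omega)
    have h1 : (n+1) % p = (n % p + 1) % p := (Nat.mod_add_mod n p 1).symm
    have hstep : cnt p a (n+1) = if n % p = a then cnt p a n + 1 else cnt p a n := by
      unfold cnt
      rw [Finset.range_add_one, Finset.filter_insert]
      split_ifs with h
      · exact Finset.card_insert_of_notMem (by simp)
      · rfl
    by_cases hc : n % p + 1 = p
    · have e1 : (n+1) % p = 0 := by rw [h1, hc, Nat.mod_self]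
      have e2 : (n+1) / p = n/p + 1 := by
        rw [Nat.succ_div, if_pos (Nat.dvd_of_mod_eq_zero e1)]
      rw [hstep, ih, e1, e2]; split_ifs <;> omega
    · have e1 : (n+1) % p = n % p + 1 := by rw [h1]; exact Nat.mod_eq_of_lt (by omega)
      have e2 : (n+1) / p = n/p := by
        rw [Nat.succ_div, if_neg (fun hd => by
          have h0 : (n+1) % p = 0 := (Nat.dvd_iff_mod_eq_zero).mp hd
          omega)]
        omega
      rw [hstep, ih, e1, e2]; split_ifs <;> omega

lemma natCast_zmod_eq_iff (p : ℕ) [NeZero p] (t : ℕ) (x : ZMod p) :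
    ((t : ZMod p) = x) ↔ t % p = x.val := by
  constructor
  · intro h; rw [← h, ZMod.val_natCast]
  · intro h
    have h2 : ((t % p : ℕ) : ZMod p) = (t : ZMod p) := ZMod.natCast_mod t p
    rw [← h2, h, ZMod.natCast_val, ZMod.cast_id]


lemma H2_eq_s8 (p q : ℕ) (hp : p.Prime) (hqp : p < q)
    (g : ZMod p) (hg1 : g ≠ 1) (τ1 τ2 : ℕ) (ht2 : τ2 < q) :
    H2 p q g 1 ((τ1 : ZMod p), (τ2 : ZMod q)) =
      cnt p (((g-1)⁻¹ * ((τ1 : ZMod p) - (τ2 : ZMod p)) + (g-1)⁻¹ * (q : ZMod p)).val) τ2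
      + (cnt p (((g-1)⁻¹ * ((τ1 : ZMod p) - (τ2 : ZMod p))).val) q
         - cnt p (((g-1)⁻¹ * ((τ1 : ZMod p) - (τ2 : ZMod p))).val) τ2) := by
  haveI : Fact p.Prime := ⟨hp⟩
  have hd : g - 1 ≠ 0 := sub_ne_zero_of_ne hg1
  set d : ZMod p := g - 1 with hdset
  set c : ZMod p := d⁻¹ * ((τ1 : ZMod p) - (τ2 : ZMod p)) with hcset
  set bb : ZMod p := d⁻¹ * (q : ZMod p) with hbset
  set B : Finset (ZMod p × ZMod q) :=
    (crtIdx p q 1).image (fun x => x + ((τ1 : ZMod p), (τ2 : ZMod q))) with hB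
  -- Step 1: H2 as a filter count over range q
  have hinj : Set.InjOn (fun t : ℕ => ((g * (t : ZMod p), (t : ZMod q)) : ZMod p × ZMod q))
      (Finset.range q) := by
    intro a ha b hb hab
    simp only [Finset.coe_range, Set.mem_Iio] at ha hb
    have h2 : ((a : ZMod q)) = (b : ZMod q) := congrArg Prod.snd hab
    rwa [ZMod.natCast_eq_natCast_iff' a b q, Nat.mod_eq_of_lt ha, Nat.mod_eq_of_lt hb] at h2
  have step1 : H2 p q g 1 ((τ1 : ZMod p), (τ2 : ZMod q)) =
      ((Finset.range q).filter (fun t : ℕ =>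
        ((g * (t : ZMod p), (t : ZMod q)) : ZMod p × ZMod q) ∈ B)).card := by
    rw [H2]
    have him : crtIdx p q g ∩ B =
        ((Finset.range q).filter (fun t : ℕ =>
          ((g * (t : ZMod p), (t : ZMod q)) : ZMod p × ZMod q) ∈ B)).image
          (fun t : ℕ => ((g * (t : ZMod p), (t : ZMod q)) : ZMod p × ZMod q)) := by
      rw [crtIdx]
      ext z
      simp only [Finset.mem_inter, Finset.mem_image, Finset.mem_filter]
      constructor
      · rintro ⟨⟨a, ha, rfl⟩, hz⟩; exact ⟨a, ⟨ha, hz⟩, rfl⟩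
      · rintro ⟨a, ⟨ha, hz⟩, rfl⟩; exact ⟨⟨a, ha, rfl⟩, hz⟩
    rw [him, Finset.card_image_of_injOn (hinj.mono (by
      intro x hx
      simp only [Finset.coe_filter, Set.mem_setOf_eq] at hx
      simpa using hx.1))]
  -- Step 2: simplify membership
  have step2 : ∀ t : ℕ, t < q →
      ((((g * (t : ZMod p), (t : ZMod q)) : ZMod p × ZMod q) ∈ B)
      ↔ g * (t : ZMod p) = (((t + q - τ2) % q : ℕ) : ZMod p) + (τ1 : ZMod p)) := by
    intro t ht
    have hs0lt : (t + q - τ2) % q < q := Nat.mod_lt _ (by omega)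
    have hs0cast : (((t + q - τ2) % q : ℕ) : ZMod q) = (t : ZMod q) - (τ2 : ZMod q) := by
      rw [ZMod.natCast_mod]
      have he : t + q - τ2 = t + (q - τ2) := by omega
      rw [he, Nat.cast_add, Nat.cast_sub (le_of_lt ht2), ZMod.natCast_self]
      ring
    rw [hB, crtIdx]
    constructor
    · intro hmem
      rw [Finset.mem_image] at hmem
      obtain ⟨x, hx, hxe⟩ := hmem
      rw [Finset.mem_image] at hx
      obtain ⟨s, hs, rfl⟩ := hx
      rw [Finset.mem_range] at hs
      have h2 : (s : ZMod q) + (τ2 : ZMod q) = (t : ZMod q) := congrArg Prod.snd hxe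
      have h1 : (1 : ZMod p) * (s : ZMod p) + (τ1 : ZMod p) = g * (t : ZMod p) :=
        congrArg Prod.fst hxe
      rw [one_mul] at h1
      have hseq : s = (t + q - τ2) % q := by
        have hv : (s : ZMod q) = (((t + q - τ2) % q : ℕ) : ZMod q) := by
          rw [hs0cast, ← h2]; ring
        have hv2 := congrArg ZMod.val hv
        rwa [ZMod.val_natCast, ZMod.val_natCast, Nat.mod_eq_of_lt hs,
          Nat.mod_eq_of_lt hs0lt] at hv2
      rw [← h1, hseq]
    · intro h
      rw [Finset.mem_image]
      refine ⟨(((((t + q - τ2) % q : ℕ) : ZMod p), (((t + q - τ2) % q : ℕ) : ZMod q))), ?_, ?_⟩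
      · rw [Finset.mem_image]
        exact ⟨(t + q - τ2) % q, Finset.mem_range.mpr hs0lt, by rw [one_mul]⟩
      · have : ((((t + q - τ2) % q : ℕ) : ZMod q)) + (τ2 : ZMod q) = (t : ZMod q) := by
          rw [hs0cast]; ring
        exact Prod.ext h.symm this
  rw [step1, Finset.filter_congr (fun t ht => step2 t (Finset.mem_range.mp ht))]
  -- Step 3
  have halg : ∀ x y : ZMod p, (g * x = x + y ↔ x = d⁻¹ * y) := by
    intro x y
    constructor
    · intro h
      have hdx : d * x = y := by rw [hdset]; linear_combination h
      rw [← hdx, inv_mul_cancel_left₀ hd]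
    · intro h
      have hdx : d * x = y := by rw [h, mul_inv_cancel_left₀ hd]
      rw [hdset] at hdx
      linear_combination hdx
  have hPlow : ∀ t : ℕ, t < τ2 →
      ((g * (t : ZMod p) = (((t + q - τ2) % q : ℕ) : ZMod p) + (τ1 : ZMod p))
        ↔ t % p = (c + bb).val) := by
    intro t htlt
    have hm : (t + q - τ2) % q = t + q - τ2 := Nat.mod_eq_of_lt (by omega)
    have hc2 : (((t + q - τ2) % q : ℕ) : ZMod p)
        = (t : ZMod p) + (q : ZMod p) - (τ2 : ZMod p) := by
      rw [hm, show t + q - τ2 = t + (q - τ2) by omega, Nat.cast_add,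
        Nat.cast_sub (le_of_lt ht2)]
      ring
    rw [hc2, ← natCast_zmod_eq_iff]
    have := halg (t : ZMod p) ((q : ZMod p) - (τ2 : ZMod p) + (τ1 : ZMod p))
    constructor
    · intro h
      rw [hcset, hbset, ← mul_add]
      have h2 : (t : ZMod p) = d⁻¹ * ((q : ZMod p) - (τ2 : ZMod p) + (τ1 : ZMod p)) :=
        this.mp (by linear_combination h)
      rw [h2]; ring_nf
    · intro h
      have h2 : (t : ZMod p) = d⁻¹ * ((q : ZMod p) - (τ2 : ZMod p) + (τ1 : ZMod p)) := by
        rw [hcset, hbset, ← mul_add] at h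
        rw [h]; ring_nf
      linear_combination this.mpr h2
  have hPhigh : ∀ t : ℕ, τ2 ≤ t → t < q →
      ((g * (t : ZMod p) = (((t + q - τ2) % q : ℕ) : ZMod p) + (τ1 : ZMod p))
        ↔ t % p = c.val) := by
    intro t htge htlt
    have hm : (t + q - τ2) % q = t - τ2 := by
      rw [show t + q - τ2 = (t - τ2) + q by omega, Nat.add_mod_right]
      exact Nat.mod_eq_of_lt (by omega)
    have hc2 : (((t + q - τ2) % q : ℕ) : ZMod p) = (t : ZMod p) - (τ2 : ZMod p) := by
      rw [hm, Nat.cast_sub htge]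
    rw [hc2, ← natCast_zmod_eq_iff]
    have := halg (t : ZMod p) (- (τ2 : ZMod p) + (τ1 : ZMod p))
    constructor
    · intro h
      have h2 : (t : ZMod p) = d⁻¹ * (- (τ2 : ZMod p) + (τ1 : ZMod p)) :=
        this.mp (by linear_combination h)
      rw [h2, hcset]; ring_nf
    · intro h
      have h2 : (t : ZMod p) = d⁻¹ * (- (τ2 : ZMod p) + (τ1 : ZMod p)) := by
        rw [hcset] at h; rw [h]; ring_nf
      linear_combination this.mpr h2
  have hsplit : Finset.range q = Finset.range τ2 ∪ Finset.Ico τ2 q := by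
    rw [Finset.range_eq_Ico, Finset.range_eq_Ico]
    exact (Finset.Ico_union_Ico_eq_Ico (Nat.zero_le _) (le_of_lt ht2)).symm
  have hdisj : Disjoint (Finset.range τ2) (Finset.Ico τ2 q) := by
    rw [Finset.disjoint_left]
    intro a ha hb
    rw [Finset.mem_range] at ha
    rw [Finset.mem_Ico] at hb
    omega
  rw [hsplit, Finset.filter_union,
    Finset.card_union_of_disjoint (Finset.disjoint_filter_filter hdisj)]
  have e1 : (Finset.range τ2).filter
      (fun t : ℕ => g * (t : ZMod p) = (((t + q - τ2) % q : ℕ) : ZMod p) + (τ1 : ZMod p))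
      = (Finset.range τ2).filter (fun t => t % p = (c + bb).val) :=
    Finset.filter_congr (fun t ht => hPlow t (Finset.mem_range.mp ht))
  have e2 : (Finset.Ico τ2 q).filter
      (fun t : ℕ => g * (t : ZMod p) = (((t + q - τ2) % q : ℕ) : ZMod p) + (τ1 : ZMod p))
      = (Finset.Ico τ2 q).filter (fun t => t % p = c.val) := by
    refine Finset.filter_congr (fun t ht => ?_)
    rw [Finset.mem_Ico] at ht
    exact hPhigh t ht.1 ht.2
  rw [e1, e2]
  have e3 : cnt p (c.val) q = cnt p (c.val) τ2
      + ((Finset.Ico τ2 q).filter (fun t => t % p = c.val)).card := by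
    rw [cnt, hsplit, Finset.filter_union,
      Finset.card_union_of_disjoint (Finset.disjoint_filter_filter hdisj)]
    rfl
  have e4 : ((Finset.range τ2).filter (fun t => t % p = (c + bb).val)).card
      = cnt p ((c + bb).val) τ2 := rfl
  omega

def Gfun (p q b cv r : ℕ) : ℕ :=
  q/p + (if cv < q%p then 1 else 0) + (if (cv+b)%p < r then 1 else 0)
    - (if cv < r then 1 else 0)

lemma sum_ite_const (s : Finset ℕ) (P : ℕ → Prop) [DecidablePred P] (c : ℕ) :
    ∑ x ∈ s, (if P x then c else 0) = c * (s.filter P).card := by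
  rw [Finset.sum_ite, Finset.sum_const, Finset.sum_const_zero, add_zero, smul_eq_mul, mul_comm]

lemma mod_shift_sum (p b : ℕ) (hp : 0 < p) (hb : b ≤ p) (f : ℕ → ℕ) :
    ∑ cv ∈ Finset.range p, f ((cv + b) % p) = ∑ cv ∈ Finset.range p, f cv := by
  refine Finset.sum_nbij' (i := fun cv => (cv + b) % p) (j := fun cv => (cv + (p - b)) % p)
    ?_ ?_ ?_ ?_ ?_
  · intro a ha; exact Finset.mem_range.mpr (Nat.mod_lt _ hp)
  · intro a ha; exact Finset.mem_range.mpr (Nat.mod_lt _ hp)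
  · intro a ha
    rw [Finset.mem_range] at ha
    show ((a + b) % p + (p - b)) % p = a
    rw [Nat.mod_add_mod, show a + b + (p - b) = a + p by omega, Nat.add_mod_right,
      Nat.mod_eq_of_lt ha]
  · intro a ha
    rw [Finset.mem_range] at ha
    show ((a + (p - b)) % p + b) % p = a
    rw [Nat.mod_add_mod, show a + (p - b) + b = a + p by omega, Nat.add_mod_right,
      Nat.mod_eq_of_lt ha]
  · intro a _; rfl

-- pointwise lemmas
lemma ptw1 (p b m qb cv r : ℕ) (hm : 1 ≤ m) (hqb : 0 < qb) (hqbp : qb < p)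
    (hb1 : p - qb < b) (hb2 : b < p) (hcv : cv < p) (hr : r < p) (B : ℕ)
    (hB : B = (cv + b) % p) :
    (if (m + (if cv < qb then 1 else 0) + (if B < r then 1 else 0)
        - (if cv < r then 1 else 0)) = m then 1 else 0)
    + (if (m + (if cv < qb then 1 else 0) + (if B < r then 1 else 0)
        - (if cv < r then 1 else 0)) = m+1 then 1 else 0)
    + (if (m + (if cv < qb then 1 else 0) + (if B < r then 1 else 0)
        - (if cv < r then 1 else 0)) = m+2 then 1 else 0) = 1 := by
  have hBv : B = if cv + b < p then cv + b else cv + b - p := by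
    rw [hB]
    split_ifs with h
    · exact Nat.mod_eq_of_lt h
    · rw [Nat.mod_eq_sub_mod (by omega)]
      exact Nat.mod_eq_of_lt (by omega)
  split_ifs at hBv ⊢ <;> omega

lemma ptw2 (p b m qb cv r : ℕ) (hm : 1 ≤ m) (hqb : 0 < qb) (hqbp : qb < p)
    (hb1 : p - qb < b) (hb2 : b < p) (hcv : cv < p) (hr : r < p) (B : ℕ)
    (hB : B = (cv + b) % p) :
    (if (m + (if cv < qb then 1 else 0) + (if B < r then 1 else 0)
        - (if cv < r then 1 else 0)) = m+1 then 1 else 0)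
    + 2 * (if (m + (if cv < qb then 1 else 0) + (if B < r then 1 else 0)
        - (if cv < r then 1 else 0)) = m+2 then 1 else 0)
    + (if cv < r then 1 else 0)
    = (if cv < qb then 1 else 0) + (if B < r then 1 else 0) := by
  have hBv : B = if cv + b < p then cv + b else cv + b - p := by
    rw [hB]
    split_ifs with h
    · exact Nat.mod_eq_of_lt h
    · rw [Nat.mod_eq_sub_mod (by omega)]
      exact Nat.mod_eq_of_lt (by omega)
  split_ifs at hBv ⊢ <;> omega

theorem S_counts (p q b : ℕ) (hp : 1 < p) (hpq : p < q) (hq0 : 0 < q % p)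
    (hb1 : p - q % p < b) (hb2 : b < p) :
    (∑ r ∈ Finset.range p, (q/p + if r < q%p then 1 else 0) *
      ((Finset.range p).filter fun cv => Gfun p q b cv r = q/p).card)
      = q * (p - q % p) + (q/p+1)*(p-b)*(q%p+b-p)
    ∧ (∑ r ∈ Finset.range p, (q/p + if r < q%p then 1 else 0) *
      ((Finset.range p).filter fun cv => Gfun p q b cv r = q/p+1).card)
      = q*(q%p) - 2*((q/p+1)*(p-b)*(q%p+b-p))
    ∧ (∑ r ∈ Finset.range p, (q/p + if r < q%p then 1 else 0) *
      ((Finset.range p).filter fun cv => Gfun p q b cv r = q/p+2).card)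
      = (q/p+1)*(p-b)*(q%p+b-p) := by
  have hp0 : 0 < p := by omega
  set m := q / p with hm
  set qb := q % p with hqb
  have hm1 : 1 ≤ m := by
    rw [hm]; exact (Nat.one_le_div_iff hp0).mpr (le_of_lt hpq)
  have hqbp : qb < p := by rw [hqb]; exact Nat.mod_lt _ hp0
  have hqpm : p * m + qb = q := by rw [hm, hqb]; exact Nat.div_add_mod q p
  have hGf : ∀ cv r : ℕ, Gfun p q b cv r
      = m + (if cv < qb then 1 else 0) + (if (cv+b)%p < r then 1 else 0)
        - (if cv < r then 1 else 0) := by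
    intro cv r; rw [Gfun, ← hm, ← hqb]
  have hfq : (Finset.range p).filter (fun r => r < qb) = Finset.range qb := by
    ext x; simp only [Finset.mem_filter, Finset.mem_range]; omega
  set W : ℕ → ℕ := fun r => m + if r < qb then 1 else 0 with hW
  set P2 : Finset (ℕ × ℕ) := Finset.range p ×ˢ Finset.range p with hP2
  set S : ℕ → ℕ := fun j => ∑ x ∈ P2, W x.1 * (if Gfun p q b x.2 x.1 = j then 1 else 0)
    with hS
  -- the sums in the statement equal S j
  have hSsum : ∀ j : ℕ, (∑ r ∈ Finset.range p, W r *
      ((Finset.range p).filter fun cv => Gfun p q b cv r = j).card) = S j := by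
    intro j
    rw [hS]
    simp only
    rw [hP2, Finset.sum_product (f := fun x : ℕ × ℕ =>
      W x.1 * (if Gfun p q b x.2 x.1 = j then 1 else 0))]
    simp only
    refine Finset.sum_congr rfl fun r _ => ?_
    rw [Finset.card_filter, Finset.mul_sum]
  have hWsum : (∑ r ∈ Finset.range p, W r) = q := by
    rw [hW]
    rw [Finset.sum_add_distrib, Finset.sum_const, Finset.card_range, smul_eq_mul,
      sum_ite_const, hfq, Finset.card_range]
    omega
  have hmem : ∀ x : ℕ × ℕ, x ∈ P2 → x.1 < p ∧ x.2 < p := by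
    intro x hx
    rw [hP2, Finset.mem_product, Finset.mem_range, Finset.mem_range] at hx
    exact hx
  -- E1
  have hE1 : S m + S (m+1) + S (m+2) = p * q := by
    rw [hS]; simp only
    rw [← Finset.sum_add_distrib, ← Finset.sum_add_distrib]
    have hpt : ∀ x ∈ P2, (W x.1 * (if Gfun p q b x.2 x.1 = m then 1 else 0)
          + W x.1 * (if Gfun p q b x.2 x.1 = m+1 then 1 else 0)
          + W x.1 * (if Gfun p q b x.2 x.1 = m+2 then 1 else 0)) = W x.1 := by
      intro x hx
      obtain ⟨h1, h2⟩ := hmem x hx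
      rw [← Nat.mul_add, ← Nat.mul_add, hGf,
        ptw1 p b m qb x.2 x.1 hm1 hq0 hqbp hb1 hb2 h2 h1 ((x.2+b)%p) rfl, mul_one]
    rw [Finset.sum_congr rfl hpt, hP2,
      Finset.sum_product (f := fun x : ℕ × ℕ => W x.1)]
    simp only
    have : ∀ r ∈ Finset.range p, (∑ _cv ∈ Finset.range p, W r) = p * W r := by
      intro r _; rw [Finset.sum_const, Finset.card_range, smul_eq_mul]
    rw [Finset.sum_congr rfl this, ← Finset.mul_sum, hWsum]
  -- TP = TM
  have hTPM : (∑ x ∈ P2, W x.1 * (if (x.2+b)%p < x.1 then 1 else 0))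
      = ∑ x ∈ P2, W x.1 * (if x.2 < x.1 then 1 else 0) := by
    rw [hP2, Finset.sum_product (f := fun x : ℕ × ℕ =>
        W x.1 * (if (x.2+b)%p < x.1 then 1 else 0)),
      Finset.sum_product (f := fun x : ℕ × ℕ => W x.1 * (if x.2 < x.1 then 1 else 0))]
    simp only
    refine Finset.sum_congr rfl fun r _ => ?_
    rw [← Finset.mul_sum, ← Finset.mul_sum,
      mod_shift_sum p b hp0 (le_of_lt hb2) (fun x => if x < r then 1 else 0)]
  -- TA = q * qb
  have hTA : (∑ x ∈ P2, W x.1 * (if x.2 < qb then 1 else 0)) = q * qb := by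
    rw [hP2, Finset.sum_product (f := fun x : ℕ × ℕ =>
        W x.1 * (if x.2 < qb then 1 else 0))]
    simp only
    have : ∀ r ∈ Finset.range p, (∑ cv ∈ Finset.range p, W r * (if cv < qb then 1 else 0))
        = W r * qb := by
      intro r _
      rw [← Finset.mul_sum, sum_ite_const, hfq, Finset.card_range, one_mul]
    rw [Finset.sum_congr rfl this, ← Finset.sum_mul, hWsum]
  -- E2
  have hE2 : S (m+1) + 2 * S (m+2) = q * qb := by
    have key2 : (∑ x ∈ P2, (W x.1 * (if Gfun p q b x.2 x.1 = m+1 then 1 else 0)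
           + 2 * (W x.1 * (if Gfun p q b x.2 x.1 = m+2 then 1 else 0))
           + W x.1 * (if x.2 < x.1 then 1 else 0)))
        = ∑ x ∈ P2, (W x.1 * (if x.2 < qb then 1 else 0)
           + W x.1 * (if (x.2+b)%p < x.1 then 1 else 0)) := by
      refine Finset.sum_congr rfl fun x hx => ?_
      obtain ⟨h1, h2⟩ := hmem x hx
      have hpt2 := ptw2 p b m qb x.2 x.1 hm1 hq0 hqbp hb1 hb2 h2 h1 ((x.2+b)%p) rfl
      rw [hGf]
      calc W x.1 * (if m + (if x.2 < qb then 1 else 0) + (if (x.2+b)%p < x.1 then 1 else 0)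
            - (if x.2 < x.1 then 1 else 0) = m+1 then 1 else 0)
           + 2 * (W x.1 * (if m + (if x.2 < qb then 1 else 0) + (if (x.2+b)%p < x.1 then 1 else 0)
            - (if x.2 < x.1 then 1 else 0) = m+2 then 1 else 0))
           + W x.1 * (if x.2 < x.1 then 1 else 0)
          = W x.1 * ((if m + (if x.2 < qb then 1 else 0) + (if (x.2+b)%p < x.1 then 1 else 0)
            - (if x.2 < x.1 then 1 else 0) = m+1 then 1 else 0)
           + 2 * (if m + (if x.2 < qb then 1 else 0) + (if (x.2+b)%p < x.1 then 1 else 0)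
            - (if x.2 < x.1 then 1 else 0) = m+2 then 1 else 0)
           + (if x.2 < x.1 then 1 else 0)) := by ring
        _ = W x.1 * ((if x.2 < qb then 1 else 0) + (if (x.2+b)%p < x.1 then 1 else 0)) := by
            rw [hpt2]
        _ = W x.1 * (if x.2 < qb then 1 else 0)
            + W x.1 * (if (x.2+b)%p < x.1 then 1 else 0) := by ring
    rw [Finset.sum_add_distrib, Finset.sum_add_distrib, Finset.sum_add_distrib,
      ← Finset.mul_sum, hTA, hTPM] at key2
    rw [hS]
    simp only
    omega
  -- E3
  have hE3 : S (m+2) = (m+1)*(p-b)*(qb+b-p) := by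
    rw [hS, hP2]
    simp only
    rw [Finset.sum_product_right (f := fun x : ℕ × ℕ =>
      W x.1 * (if Gfun p q b x.2 x.1 = m+2 then 1 else 0))]
    simp only
    have hinner : ∀ cv ∈ Finset.range p,
        (∑ r ∈ Finset.range p, W r * (if Gfun p q b cv r = m+2 then 1 else 0))
        = if p - b ≤ cv ∧ cv < qb then (m+1)*(p-b) else 0 := by
      intro cv hcv
      rw [Finset.mem_range] at hcv
      by_cases h : p - b ≤ cv ∧ cv < qb
      · have hmod : (cv + b) % p = cv + b - p := by
          rw [Nat.mod_eq_sub_mod (by omega)]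
          exact Nat.mod_eq_of_lt (by omega)
        have hpt : ∀ r ∈ Finset.range p, W r * (if Gfun p q b cv r = m+2 then 1 else 0)
            = if cv + b - p < r ∧ r ≤ cv then m+1 else 0 := by
          intro r hr
          rw [Finset.mem_range] at hr
          rw [hGf, hmod, hW]
          simp only
          split_ifs <;> omega
        rw [Finset.sum_congr rfl hpt, sum_ite_const, if_pos h]
        have hIoc : (Finset.range p).filter (fun r => cv + b - p < r ∧ r ≤ cv)
            = Finset.Ioc (cv+b-p) cv := by
          ext x; simp only [Finset.mem_filter, Finset.mem_range, Finset.mem_Ioc]; omega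
        rw [hIoc, Nat.card_Ioc, show cv - (cv + b - p) = p - b by omega]
      · have hmod : (cv + b) % p = if cv + b < p then cv + b else cv + b - p := by
          split_ifs with hlt
          · exact Nat.mod_eq_of_lt hlt
          · rw [Nat.mod_eq_sub_mod (by omega)]
            exact Nat.mod_eq_of_lt (by omega)
        have hpt : ∀ r ∈ Finset.range p, W r * (if Gfun p q b cv r = m+2 then 1 else 0)
            = 0 := by
          intro r hr
          rw [Finset.mem_range] at hr
          rw [hGf, hW]
          simp only
          split_ifs at hmod ⊢ <;> omega
        rw [Finset.sum_congr rfl hpt, Finset.sum_const, smul_eq_mul, Nat.mul_zero, if_neg h]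
    rw [Finset.sum_congr rfl hinner, sum_ite_const]
    have hIco : (Finset.range p).filter (fun cv => p - b ≤ cv ∧ cv < qb)
        = Finset.Ico (p-b) qb := by
      ext x; simp only [Finset.mem_filter, Finset.mem_range, Finset.mem_Ico]; omega
    rw [hIco, Nat.card_Ico, show qb - (p - b) = qb + b - p by omega]
  -- conclude
  have hsplitq : q * (p - qb) + q * qb = p * q := by
    rw [← Nat.mul_add, show p - qb + qb = p by omega, Nat.mul_comm]
  rw [hSsum m, hSsum (m+1), hSsum (m+2)]
  refine ⟨?_, ?_, ?_⟩ <;> omega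

lemma cnt_combine (p q τ2 cb cv : ℕ) (hp : 1 < p) (hq : p < q) (ht2 : τ2 < q)
    (hcb : cb < p) (hcv : cv < p) :
    cnt p cb τ2 + (cnt p cv q - cnt p cv τ2)
      = q/p + (if cv < q%p then 1 else 0) + (if cb < τ2 % p then 1 else 0)
        - (if cv < τ2 % p then 1 else 0) := by
  rw [cnt_eq p hp cb hcb, cnt_eq p hp cv hcv, cnt_eq p hp cv hcv]
  have h1 : τ2 / p ≤ q / p := Nat.div_le_div_right (le_of_lt ht2)
  have h2 : τ2 / p = q / p → τ2 % p < q % p := by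
    intro hdd
    have e1 := Nat.div_add_mod τ2 p
    have e2 := Nat.div_add_mod q p
    rw [hdd] at e1
    omega
  have h3 : τ2 % p < p := Nat.mod_lt _ (by omega)
  have h4 : q % p < p := Nat.mod_lt _ (by omega)
  rcases eq_or_lt_of_le h1 with heq | hlt
  · have h5 := h2 heq
    generalize τ2 / p = k at *
    generalize q / p = m at *
    generalize τ2 % p = r at *
    generalize q % p = s at *
    split_ifs <;> omega
  · generalize τ2 / p = k at *
    generalize q / p = m at *
    generalize τ2 % p = r at *
    generalize q % p = s at *
    split_ifs <;> omega

lemma H2_val (p q : ℕ) (hp : p.Prime) (hqp : p < q)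
    (g : ZMod p) (hg1 : g ≠ 1) (τ1 τ2 : ℕ) (ht2 : τ2 < q) :
    H2 p q g 1 ((τ1 : ZMod p), (τ2 : ZMod q)) =
      Gfun p q (((g-1)⁻¹ * (q : ZMod p)).val)
        (((g-1)⁻¹ * ((τ1 : ZMod p) - (τ2 : ZMod p))).val) (τ2 % p) := by
  haveI : Fact p.Prime := ⟨hp⟩
  rw [H2_eq_s8 p q hp hqp g hg1 τ1 τ2 ht2]
  have hcb : ((g-1)⁻¹ * ((τ1 : ZMod p) - (τ2 : ZMod p)) + (g-1)⁻¹ * (q : ZMod p)).val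
      = ((((g-1)⁻¹ * ((τ1 : ZMod p) - (τ2 : ZMod p))).val
          + ((g-1)⁻¹ * (q : ZMod p)).val) % p) := ZMod.val_add _ _
  rw [hcb, Gfun]
  exact cnt_combine p q τ2 _ _ hp.one_lt hqp ht2 (Nat.mod_lt _ (by have := hp.pos; omega))
    (ZMod.val_lt _)

lemma count_tau1 (p q : ℕ) (hp : p.Prime) (hqp : p < q)
    (g : ZMod p) (hg1 : g ≠ 1) (τ2 : ℕ) (ht2 : τ2 < q) (j : ℕ) :
    ((Finset.range p).filter fun τ1 : ℕ => H2 p q g 1 ((τ1 : ZMod p), (τ2 : ZMod q)) = j).card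
      = ((Finset.range p).filter fun cv =>
          Gfun p q (((g-1)⁻¹ * (q : ZMod p)).val) cv (τ2 % p) = j).card := by
  haveI : Fact p.Prime := ⟨hp⟩
  have hd : g - 1 ≠ 0 := sub_ne_zero_of_ne hg1
  refine Finset.card_nbij'
    (i := fun τ1 : ℕ => ((g-1)⁻¹ * (((τ1 : ℕ) : ZMod p) - (τ2 : ZMod p))).val)
    (j := fun cv => ((g-1) * (cv : ZMod p) + (τ2 : ZMod p)).val) ?_ ?_ ?_ ?_
  · intro a ha
    rw [Finset.mem_coe, Finset.mem_filter] at ha ⊢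
    refine ⟨Finset.mem_range.mpr (ZMod.val_lt _), ?_⟩
    rw [← H2_val p q hp hqp g hg1 a τ2 ht2]
    exact ha.2
  · intro a ha
    rw [Finset.mem_coe, Finset.mem_filter] at ha ⊢
    rw [Finset.mem_range] at ha
    refine ⟨Finset.mem_range.mpr (ZMod.val_lt _), ?_⟩
    rw [H2_val p q hp hqp g hg1 _ τ2 ht2]
    have hval : ((((g-1) * (a : ZMod p) + (τ2 : ZMod p)).val : ℕ) : ZMod p)
        = (g-1) * (a : ZMod p) + (τ2 : ZMod p) := by
      rw [ZMod.natCast_val, ZMod.cast_id]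
    rw [hval]
    have hsimp : (g-1)⁻¹ * ((g-1) * (a : ZMod p) + (τ2 : ZMod p) - (τ2 : ZMod p))
        = (a : ZMod p) := by
      field_simp
      ring
    rw [hsimp, ZMod.val_natCast, Nat.mod_eq_of_lt ha.1]
    exact ha.2
  · intro a ha
    rw [Finset.mem_coe, Finset.mem_filter, Finset.mem_range] at ha
    show ((g-1) * ((((g-1)⁻¹ * ((a : ZMod p) - (τ2 : ZMod p))).val : ℕ) : ZMod p)
      + (τ2 : ZMod p)).val = a
    have hval : ((((g-1)⁻¹ * ((a : ZMod p) - (τ2 : ZMod p))).val : ℕ) : ZMod p)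
        = (g-1)⁻¹ * ((a : ZMod p) - (τ2 : ZMod p)) := by
      rw [ZMod.natCast_val, ZMod.cast_id]
    rw [hval]
    have hsimp : (g-1) * ((g-1)⁻¹ * ((a : ZMod p) - (τ2 : ZMod p))) + (τ2 : ZMod p)
        = (a : ZMod p) := by
      rw [mul_inv_cancel_left₀ hd]; ring
    rw [hsimp, ZMod.val_natCast, Nat.mod_eq_of_lt ha.1]
  · intro a ha
    rw [Finset.mem_coe, Finset.mem_filter, Finset.mem_range] at ha
    show ((g-1)⁻¹ * (((((g-1) * (a : ZMod p) + (τ2 : ZMod p)).val : ℕ) : ZMod p)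
      - (τ2 : ZMod p))).val = a
    have hval : ((((g-1) * (a : ZMod p) + (τ2 : ZMod p)).val : ℕ) : ZMod p)
        = (g-1) * (a : ZMod p) + (τ2 : ZMod p) := by
      rw [ZMod.natCast_val, ZMod.cast_id]
    rw [hval]
    have hsimp : (g-1)⁻¹ * ((g-1) * (a : ZMod p) + (τ2 : ZMod p) - (τ2 : ZMod p))
        = (a : ZMod p) := by
      field_simp
      ring
    rw [hsimp, ZMod.val_natCast, Nat.mod_eq_of_lt ha.1]

lemma Ncross_eq (p q : ℕ) (hp : p.Prime) (hqp : p < q)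
    (g : ZMod p) (hg1 : g ≠ 1) (j : ℕ) :
    Ncross p q g j = ∑ r ∈ Finset.range p, (q/p + if r < q%p then 1 else 0) *
      ((Finset.range p).filter fun cv =>
        Gfun p q (((g-1)⁻¹ * (q : ZMod p)).val) cv r = j).card := by
  have hp1 : 1 < p := hp.one_lt
  rw [Ncross, Finset.card_filter,
    Finset.sum_product (f := fun τ : ℕ × ℕ =>
      if H2 p q g 1 ((τ.1 : ZMod p), (τ.2 : ZMod q)) = j then 1 else 0)]
  simp only
  rw [Finset.sum_comm]
  have h1 : ∀ τ2 ∈ Finset.range q,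
      (∑ τ1 ∈ Finset.range p,
        if H2 p q g 1 (((τ1 : ℕ) : ZMod p), (τ2 : ZMod q)) = j then 1 else 0)
      = ((Finset.range p).filter fun cv =>
          Gfun p q (((g-1)⁻¹ * (q : ZMod p)).val) cv (τ2 % p) = j).card := by
    intro τ2 hτ2
    rw [Finset.mem_range] at hτ2
    rw [← count_tau1 p q hp hqp g hg1 τ2 hτ2 j, Finset.card_filter]
  rw [Finset.sum_congr rfl h1]
  have h2 := Finset.sum_comp
    (s := Finset.range q)
    (f := fun r => ((Finset.range p).filter fun cv =>
      Gfun p q (((g-1)⁻¹ * (q : ZMod p)).val) cv r = j).card)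
    (g := fun τ2 : ℕ => τ2 % p)
  rw [h2]
  have him : (Finset.range q).image (fun τ2 : ℕ => τ2 % p) = Finset.range p := by
    ext a
    simp only [Finset.mem_image, Finset.mem_range]
    constructor
    · rintro ⟨t, ht, rfl⟩; exact Nat.mod_lt _ (by omega)
    · intro ha; exact ⟨a, by omega, Nat.mod_eq_of_lt ha⟩
  rw [him]
  refine Finset.sum_congr rfl fun r hr => ?_
  rw [Finset.mem_range] at hr
  have hc : ((Finset.range q).filter fun τ2 : ℕ => τ2 % p = r).card = cnt p r q := rfl
  rw [hc, cnt_eq p hp1 r hr q, smul_eq_mul]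

theorem stmt8 (p q : ℕ) (hp : p.Prime) (hpq : ¬ p ∣ q) (hqp : p < q)
    (g : ZMod p) (hg0 : g ≠ 0) (hg1 : g ≠ 1)
    (hb : p - q % p < ((g - 1)⁻¹ * (q : ZMod p)).val) :
    Ncross p q g (q / p) =
      q * (p - q % p) +
        (q / p + 1) * (p - ((g - 1)⁻¹ * (q : ZMod p)).val) *
          (q % p + ((g - 1)⁻¹ * (q : ZMod p)).val - p) ∧
    Ncross p q g (q / p + 1) =
      q * (q % p) -
        2 * ((q / p + 1) * (p - ((g - 1)⁻¹ * (q : ZMod p)).val) *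
          (q % p + ((g - 1)⁻¹ * (q : ZMod p)).val - p)) ∧
    Ncross p q g (q / p + 2) =
      (q / p + 1) * (p - ((g - 1)⁻¹ * (q : ZMod p)).val) *
        (q % p + ((g - 1)⁻¹ * (q : ZMod p)).val - p) := by
  have hp1 : 1 < p := hp.one_lt
  haveI : Fact p.Prime := ⟨hp⟩
  have hq0 : 0 < q % p := by
    rcases Nat.eq_zero_or_pos (q % p) with h | h
    · exact absurd (Nat.dvd_of_mod_eq_zero h) hpq
    · exact h
  have hblt : ((g - 1)⁻¹ * (q : ZMod p)).val < p := ZMod.val_lt _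
  obtain ⟨h1, h2, h3⟩ := S_counts p q (((g - 1)⁻¹ * (q : ZMod p)).val) hp1 hqp hq0 hb hblt
  exact ⟨by rw [Ncross_eq p q hp hqp g hg1]; exact h1,
         by rw [Ncross_eq p q hp hqp g hg1]; exact h2,
         by rw [Ncross_eq p q hp hqp g hg1]; exact h3⟩
end

section
/- Let p be an odd prime and q = mp + 1 for a positive integer m (so q > p and q is not divisible by p). Then for every g ∈ {2, 3, …, p−1} and every (τ1, τ2) ∈ Z_p ⊕ Z_q, m − 1 ≤ H_{g1}(τ1, τ2) ≤ m + 1. -/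
section Aux
open Finset

lemma count_mod (p : ℕ) (hp : 0 < p) (r : ℕ) (hr : r < p) (n : ℕ) :
    ((Finset.range n).filter (fun t => t % p = r)).card
      = n / p + if r < n % p then 1 else 0 := by
  induction n with
  | zero => simp [Nat.zero_div]
  | succ n ih =>
    rw [Finset.range_add_one, Finset.filter_insert]
    have hd := Nat.div_add_mod n p
    have hm : n % p < p := Nat.mod_lt _ hp
    have hsplit : (n+1) / p = n / p + (if n % p = p - 1 then 1 else 0) ∧
        (n+1) % p = (if n % p = p - 1 then 0 else n % p + 1) := by
      by_cases h : n % p = p - 1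
      · have h2 : n + 1 = p * (n / p + 1) := by rw [Nat.mul_succ]; omega
        simp [h, h2, Nat.mul_div_cancel_left _ hp, Nat.mul_mod_right]
      · have h2 : n + 1 = p * (n / p) + (n % p + 1) := by omega
        rw [h2]
        simp [h, Nat.mul_add_div hp, Nat.mul_add_mod,
          Nat.div_eq_of_lt (by omega : n % p + 1 < p),
          Nat.mod_eq_of_lt (by omega : n % p + 1 < p)]
    obtain ⟨hdiv, hmod⟩ := hsplit
    by_cases h : n % p = r
    · rw [if_pos h, Finset.card_insert_of_notMem (by simp), ih, hdiv, hmod]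
      split_ifs <;> omega
    · rw [if_neg h, ih, hdiv, hmod]
      split_ifs <;> omega

end Aux


lemma mem_crtIdx {p q : ℕ} [NeZero q] (g : ZMod p) (x : ZMod p) (y : ZMod q) :
    (x, y) ∈ crtIdx p q g ↔ x = g * ((y.val : ℕ) : ZMod p) := by
  constructor
  · intro h
    simp only [crtIdx, Finset.mem_image, Finset.mem_range, Prod.mk.injEq] at h
    obtain ⟨t, ht, h1, h2⟩ := h
    have : y.val = t := by rw [← h2]; exact ZMod.val_cast_of_lt ht
    rw [this, ← h1]
  · intro h
    simp only [crtIdx, Finset.mem_image, Finset.mem_range, Prod.mk.injEq]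
    exact ⟨y.val, ZMod.val_lt y, h.symm, by simp [ZMod.natCast_val, ZMod.cast_id]⟩

lemma mem_image_add {α : Type*} [AddCommGroup α] [DecidableEq α] (A : Finset α) (τ z : α) :
    z ∈ A.image (fun x => x + τ) ↔ z - τ ∈ A := by
  simp only [Finset.mem_image]
  constructor
  · rintro ⟨w, hw, rfl⟩; simpa using hw
  · intro h; exact ⟨z - τ, h, by abel⟩

lemma H2_eq_s9 (p q : ℕ) [NeZero q] (g : ZMod p) (τ : ZMod p × ZMod q) :
    H2 p q g 1 τ = (Finset.univ.filter (fun y : ZMod q =>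
      g * ((y.val : ℕ) : ZMod p) = (((y - τ.2).val : ℕ) : ZMod p) + τ.1)).card := by
  unfold H2
  apply Finset.card_bij (fun z _ => z.2)
  · rintro ⟨x, y⟩ hz
    rw [Finset.mem_inter] at hz
    obtain ⟨h1, h2⟩ := hz
    rw [mem_crtIdx] at h1
    rw [mem_image_add] at h2
    have h2'' : (x - τ.1, y - τ.2) ∈ crtIdx p q 1 := h2
    rw [mem_crtIdx, one_mul] at h2''
    simp only [Finset.mem_filter, Finset.mem_univ, true_and]
    rw [← h1, ← h2'']
    ring
  · rintro ⟨x1, y1⟩ h1 ⟨x2, y2⟩ h2 h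
    simp only at h
    rw [Finset.mem_inter, mem_crtIdx] at h1 h2
    subst h
    rw [Prod.mk.injEq]
    exact ⟨h1.1.trans h2.1.symm, rfl⟩
  · intro y hy
    simp only [Finset.mem_filter, Finset.mem_univ, true_and] at hy
    refine ⟨(g * ((y.val : ℕ) : ZMod p), y), ?_, rfl⟩
    rw [Finset.mem_inter, mem_crtIdx, mem_image_add]
    refine ⟨rfl, ?_⟩
    show (g * ((y.val : ℕ) : ZMod p) - τ.1, y - τ.2) ∈ crtIdx p q 1
    rw [mem_crtIdx, one_mul, hy]
    ring

lemma card_filter_univ (q : ℕ) [NeZero q] (P : ZMod q → Prop) [DecidablePred P] :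
    (Finset.univ.filter P).card = ((Finset.range q).filter (fun t => P ((t : ℕ) : ZMod q))).card := by
  apply Finset.card_bij' (fun y _ => y.val) (fun t _ => ((t : ℕ) : ZMod q))
  · intro y hy
    simp only [Finset.mem_filter, Finset.mem_range]
    simp only [Finset.mem_filter, Finset.mem_univ, true_and] at hy
    refine ⟨ZMod.val_lt y, ?_⟩
    simpa [ZMod.natCast_val, ZMod.cast_id] using hy
  · intro t ht
    simp only [Finset.mem_filter, Finset.mem_univ, true_and]
    exact (Finset.mem_filter.mp ht).2
  · intro y _; simp [ZMod.natCast_val, ZMod.cast_id]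
  · intro t ht
    exact ZMod.val_cast_of_lt (Finset.mem_range.mp (Finset.mem_filter.mp ht).1)

lemma unit_eq_iff {K : Type*} [Field K] {u c x : K} (hu : u ≠ 0) :
    u * x = c ↔ x = u⁻¹ * c := by
  constructor
  · intro h; rw [← h, ← mul_assoc, inv_mul_cancel₀ hu, one_mul]
  · intro h; rw [h, ← mul_assoc, mul_inv_cancel₀ hu, one_mul]

lemma cast_eq_iff_mod {p : ℕ} [NeZero p] (t : ℕ) (a : ZMod p) :
    ((t : ℕ) : ZMod p) = a ↔ t % p = a.val := by
  conv_lhs => rw [show a = ((a.val : ℕ) : ZMod p) by simp [ZMod.natCast_val, ZMod.cast_id]]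
  rw [ZMod.natCast_eq_natCast_iff', Nat.mod_eq_of_lt (ZMod.val_lt a)]

theorem stmt9 (p m : ℕ) (hp : p.Prime) (hodd : Odd p) (hm : 0 < m)
    (g : ZMod p) (hg : 2 ≤ g.val) (τ : ZMod p × ZMod (m * p + 1)) :
    m - 1 ≤ H2 p (m * p + 1) g 1 τ ∧ H2 p (m * p + 1) g 1 τ ≤ m + 1 := by
  have hp2 : 2 ≤ p := hp.two_le
  haveI : Fact p.Prime := ⟨hp⟩
  haveI : Fact (1 < p) := ⟨by omega⟩
  haveI : NeZero p := ⟨by omega⟩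
  haveI : NeZero (m * p + 1) := ⟨by positivity⟩
  obtain ⟨τ1, τ2⟩ := τ
  set s : ℕ := τ2.val with hs_def
  have hs : s < m * p + 1 := ZMod.val_lt τ2
  have hg1 : g ≠ 1 := by
    intro h; rw [h, ZMod.val_one] at hg; omega
  have hu : (g - 1 : ZMod p) ≠ 0 := sub_ne_zero.mpr hg1
  set a : ZMod p := (g - 1)⁻¹ * (τ1 - (s : ZMod p)) with ha_def
  set b : ZMod p := (g - 1)⁻¹ * (τ1 - (s : ZMod p) + 1) with hb_def
  have hab : a ≠ b := by
    intro h
    have := mul_left_cancel₀ (inv_ne_zero hu) h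
    simp at this
  have habv : a.val ≠ b.val := fun h => hab (ZMod.val_injective _ h)
  have hav : a.val < p := ZMod.val_lt a
  have hbv : b.val < p := ZMod.val_lt b
  have hτ2 : ((s : ℕ) : ZMod (m * p + 1)) = τ2 := by
    simp [hs_def, ZMod.natCast_val, ZMod.cast_id]
  have hq1 : ((m * p + 1 : ℕ) : ZMod p) = 1 := by
    push_cast
    simp [ZMod.natCast_self]
  have hH : H2 p (m * p + 1) g 1 (τ1, τ2)
      = ((Finset.range (m * p + 1)).filter
          (fun t => (s ≤ t ∧ t % p = a.val) ∨ (t < s ∧ t % p = b.val))).card := by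
    rw [H2_eq_s9, card_filter_univ]
    congr 1
    apply Finset.filter_congr
    intro t ht
    have ht' : t < m * p + 1 := Finset.mem_range.mp ht
    have hval : (t : ZMod (m * p + 1)).val = t := ZMod.val_cast_of_lt ht'
    have hsub : ((t : ZMod (m * p + 1)) - τ2).val
        = if s ≤ t then t - s else t + (m * p + 1) - s := by
      have h1 : (t : ZMod (m * p + 1)) - τ2
          = (((if s ≤ t then t - s else t + (m * p + 1) - s : ℕ)) : ZMod (m * p + 1)) := by
        split_ifs with h
        · rw [Nat.cast_sub h, hτ2]
        · rw [Nat.cast_sub (by omega : s ≤ t + (m * p + 1)), Nat.cast_add,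
            ZMod.natCast_self, ← hτ2]
          ring
      rw [h1, ZMod.val_cast_of_lt (by split_ifs <;> omega)]
    simp only [hval, hsub]
    by_cases h : s ≤ t
    · rw [if_pos h]
      have e1 : (g * (t : ZMod p) = ((t - s : ℕ) : ZMod p) + τ1)
          ↔ ((g - 1) * (t : ZMod p) = τ1 - (s : ZMod p)) := by
        rw [Nat.cast_sub h]
        constructor <;> intro hh <;> linear_combination hh
      rw [e1, unit_eq_iff hu, ← ha_def, cast_eq_iff_mod]
      constructor
      · intro hh; exact Or.inl ⟨h, hh⟩
      · rintro (⟨-, hh⟩ | ⟨hh, -⟩)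
        · exact hh
        · omega
    · rw [if_neg h]
      have e1 : (g * (t : ZMod p) = ((t + (m * p + 1) - s : ℕ) : ZMod p) + τ1)
          ↔ ((g - 1) * (t : ZMod p) = τ1 - (s : ZMod p) + 1) := by
        rw [Nat.cast_sub (by omega : s ≤ t + (m * p + 1))]
        push_cast [hq1]
        constructor <;> intro hh <;> linear_combination hh
      rw [e1, unit_eq_iff hu, ← hb_def, cast_eq_iff_mod]
      constructor
      · intro hh; exact Or.inr ⟨by omega, hh⟩
      · rintro (⟨hh, -⟩ | ⟨-, hh⟩)
        · omega
        · exact hh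
  rw [hH]
  -- now pure counting
  have e1 : ((Finset.range (m * p + 1)).filter
          (fun t => (s ≤ t ∧ t % p = a.val) ∨ (t < s ∧ t % p = b.val))).card
      = ((Finset.range (m * p + 1)).filter (fun t => s ≤ t ∧ t % p = a.val)).card
        + ((Finset.range (m * p + 1)).filter (fun t => t < s ∧ t % p = b.val)).card := by
    rw [Finset.filter_or]
    apply Finset.card_union_of_disjoint
    rw [Finset.disjoint_left]
    intro x hx hy
    simp only [Finset.mem_filter] at hx hy
    omega
  have e2 : ((Finset.range (m * p + 1)).filter (fun t => t < s ∧ t % p = b.val))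
      = (Finset.range s).filter (fun t => t % p = b.val) := by
    ext t
    simp only [Finset.mem_filter, Finset.mem_range]
    constructor
    · rintro ⟨-, h1, h2⟩; exact ⟨h1, h2⟩
    · rintro ⟨h1, h2⟩; exact ⟨by omega, h1, h2⟩
  have e3 : ((Finset.range (m * p + 1)).filter (fun t => t % p = a.val)).card
      = ((Finset.range s).filter (fun t => t % p = a.val)).card
        + ((Finset.range (m * p + 1)).filter (fun t => s ≤ t ∧ t % p = a.val)).card := by
    rw [← Finset.card_union_of_disjoint]
    · congr 1
      ext t
      simp only [Finset.mem_union, Finset.mem_filter, Finset.mem_range]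
      constructor
      · rintro ⟨h1, h2⟩
        by_cases hts : t < s
        · exact Or.inl ⟨hts, h2⟩
        · exact Or.inr ⟨h1, by omega, h2⟩
      · rintro (⟨h1, h2⟩ | ⟨h1, h2, h3⟩)
        · exact ⟨by omega, h2⟩
        · exact ⟨h1, h3⟩
    · rw [Finset.disjoint_left]
      intro x hx hy
      simp only [Finset.mem_filter, Finset.mem_range] at hx hy
      omega
  have hAq := count_mod p (by omega) a.val hav (m * p + 1)
  have hAs := count_mod p (by omega) a.val hav s
  have hBs := count_mod p (by omega) b.val hbv s
  have hqd : (m * p + 1) / p = m := by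
    rw [mul_comm, Nat.mul_add_div (by omega), Nat.div_eq_of_lt (by omega)]
    omega
  have hqm : (m * p + 1) % p = 1 := by
    rw [mul_comm, Nat.mul_add_mod, Nat.mod_eq_of_lt (by omega)]
  rw [hqd, hqm] at hAq
  rw [e1, e2, hBs]
  rw [hAq, hAs] at e3
  set k := s / p with hk
  set r := s % p with hr
  split_ifs at e3 ⊢ <;> omega
end

section
/- Let p be a prime and q a positive integer not divisible by p, and L = pq. The Hamming auto-correlation of the CRT sequence s_0 satisfies H_{s_0 s_0}(τ) = q if p divides τ and H_{s_0 s_0}(τ) = 0 otherwise. For g ∈ {1, 2, …, p−1}, the Hamming auto-correlation of s_g satisfies: H_{s_g s_g}(τ) = q − k if Φ_{p,q}(τ) = ±(g,1)·k in Z_p ⊕ Z_q for some k ∈ {0, 1, …, q−1} (where (g,1)·k denotes the sum of k copies of (g,1)), and H_{s_g s_g}(τ) = 0 otherwise. -/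
lemma mem_crtIdx_iff {p q : ℕ} (hq : 0 < q) (g : ZMod p) (t : ℕ) :
    ((t : ZMod p), (t : ZMod q)) ∈ crtIdx p q g ↔
      (t : ZMod p) = g * ((t % q : ℕ) : ZMod p) := by
  simp only [crtIdx, Finset.mem_image, Finset.mem_range, Prod.mk.injEq]
  constructor
  · rintro ⟨s, hs, h1, h2⟩
    have hsq : s = t % q := by
      have h3 := (ZMod.natCast_eq_natCast_iff _ _ _).mp h2
      rwa [Nat.ModEq, Nat.mod_eq_of_lt hs] at h3
    rw [← h1, hsq]
  · intro h
    exact ⟨t % q, Nat.mod_lt t hq, h.symm, by rw [ZMod.natCast_mod]⟩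

lemma crtSeq_eq_one_iff {p q : ℕ} (hq : 0 < q) (g : ZMod p) (t : ℕ) :
    crtSeq p q g t = 1 ↔ (t : ZMod p) = g * ((t % q : ℕ) : ZMod p) := by
  rw [crtSeq, ← mem_crtIdx_iff hq g t]
  split_ifs with h <;> simp [h]

lemma crt_master (p q : ℕ) (hp : p.Prime) (hq : 0 < q) (hpq : ¬ p ∣ q) (g : ZMod p)
    (τ : ℕ) (hτ : τ < p * q) :
    hammingCorr (p * q) (crtSeq p q g) (crtSeq p q g) τ =
      (if (τ : ZMod p) = -(g * (((p * q - τ) % q : ℕ) : ZMod p))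
        then q - (p * q - τ) % q else 0) +
      (if (τ : ZMod p) = g * ((q : ZMod p) - (((p * q - τ) % q : ℕ) : ZMod p))
        then (p * q - τ) % q else 0) := by
  haveI : Fact p.Prime := ⟨hp⟩
  set L := p * q with hL
  set d := (L - τ) % q with hd
  have hLpos : 0 < L := Nat.mul_pos hp.pos hq
  have hτL : τ ≤ L := hτ.le
  have hdq : d < q := Nat.mod_lt _ hq
  have hdvdp : p ∣ L := ⟨q, rfl⟩
  have hdvdq : q ∣ L := ⟨p, mul_comm p q⟩
  have hco : Nat.Coprime p q := (Nat.Prime.coprime_iff_not_dvd hp).mpr hpq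
  have castp : ∀ x : ℕ, ((x % L : ℕ) : ZMod p) = (x : ZMod p) := fun x =>
    (ZMod.natCast_eq_natCast_iff _ _ _).mpr ((Nat.mod_modEq x L).of_dvd hdvdp)
  have hLp : ((L : ℕ) : ZMod p) = 0 := by rw [hL]; push_cast; simp
  have hnegτ : ((L - τ : ℕ) : ZMod p) = -(τ : ZMod p) := by
    have h0 : ((L - τ : ℕ) : ZMod p) + (τ : ZMod p) = 0 := by
      rw [← Nat.cast_add, Nat.sub_add_cancel hτL, hLp]
    linear_combination h0
  have hshiftq : ∀ t : ℕ, ((t + L - τ) % L) % q = (t % q + d) % q := by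
    intro t
    rw [Nat.mod_mod_of_dvd _ hdvdq, Nat.add_sub_assoc hτL, Nat.add_mod, hd]
  have hshiftp : ∀ t : ℕ, (((t + L - τ) % L : ℕ) : ZMod p)
      = (t : ZMod p) - (τ : ZMod p) := by
    intro t
    rw [castp, Nat.add_sub_assoc hτL, Nat.cast_add, hnegτ]
    ring
  -- Step 1+2: hammingCorr equals a count over residues mod q
  have step12 : hammingCorr L (crtSeq p q g) (crtSeq p q g) τ =
      ((Finset.range q).filter (fun b : ℕ =>
        g * (b : ZMod p) - (τ : ZMod p) = g * (((b + d) % q : ℕ) : ZMod p))).card := by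
    have hmod : τ % L = τ := Nat.mod_eq_of_lt hτ
    have hsum : hammingCorr L (crtSeq p q g) (crtSeq p q g) τ =
        ((Finset.range L).filter (fun t : ℕ =>
          crtSeq p q g t = 1 ∧ crtSeq p q g ((t + L - τ) % L) = 1)).card := by
      rw [Finset.card_filter]
      unfold hammingCorr
      rw [hmod]
      apply Finset.sum_congr rfl
      intro t _
      rcases Nat.eq_zero_or_pos (crtSeq p q g t) with h1 | h1
      · have h1' : ¬ crtSeq p q g t = 1 := by omega
        simp [h1, h1']
      · have h1' : crtSeq p q g t = 1 := by
          unfold crtSeq at h1 ⊢; split_ifs at h1 ⊢ <;> omega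
        rcases Nat.eq_zero_or_pos (crtSeq p q g ((t + L - τ) % L)) with h2 | h2
        · have h2' : ¬ crtSeq p q g ((t + L - τ) % L) = 1 := by omega
          simp [h2, h1', h2']
        · have h2' : crtSeq p q g ((t + L - τ) % L) = 1 := by
            unfold crtSeq at h2 ⊢; split_ifs at h2 ⊢ <;> omega
          simp [h1', h2']
    rw [hsum]
    apply Finset.card_bij (fun t _ => t % q)
    · intro t ht
      simp only [Finset.mem_filter, Finset.mem_range] at ht ⊢
      obtain ⟨htL, h1, h2⟩ := ht
      rw [crtSeq_eq_one_iff hq] at h1 h2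
      refine ⟨Nat.mod_lt t hq, ?_⟩
      rw [hshiftp, hshiftq] at h2
      rw [← h1]
      exact h2
    · intro t1 ht1 t2 ht2 he
      simp only [Finset.mem_filter, Finset.mem_range] at ht1 ht2
      obtain ⟨hL1, ha1, -⟩ := ht1
      obtain ⟨hL2, ha2, -⟩ := ht2
      rw [crtSeq_eq_one_iff hq] at ha1 ha2
      have hpmod : t1 ≡ t2 [MOD p] := by
        apply (ZMod.natCast_eq_natCast_iff _ _ _).mp
        rw [ha1, ha2, he]
      have hqmod : t1 ≡ t2 [MOD q] := he
      have hmul := (Nat.modEq_and_modEq_iff_modEq_mul hco).mp ⟨hpmod, hqmod⟩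
      rwa [Nat.ModEq, Nat.mod_eq_of_lt hL1, Nat.mod_eq_of_lt hL2] at hmul
    · intro b hb
      simp only [Finset.mem_filter, Finset.mem_range] at hb
      obtain ⟨hbq, hCb⟩ := hb
      obtain ⟨c, hcp, hcq⟩ := Nat.chineseRemainder hco ((g * (b : ZMod p)).val) b
      have hcLq : (c % L) % q = b := by
        have h1 : c % L ≡ b [MOD q] := ((Nat.mod_modEq c L).of_dvd hdvdq).trans hcq
        rwa [Nat.ModEq, Nat.mod_eq_of_lt hbq] at h1
      have hcLp : ((c % L : ℕ) : ZMod p) = g * (b : ZMod p) := by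
        rw [castp]
        have h2 := (ZMod.natCast_eq_natCast_iff _ _ _).mpr hcp
        rw [h2]
        simp [ZMod.natCast_val, ZMod.cast_id]
      refine ⟨c % L, ?_, hcLq⟩
      simp only [Finset.mem_filter, Finset.mem_range]
      refine ⟨Nat.mod_lt _ hLpos, ?_, ?_⟩
      · rw [crtSeq_eq_one_iff hq, hcLq, hcLp]
      · rw [crtSeq_eq_one_iff hq, hshiftp, hshiftq, hcLq, hcLp]
        exact hCb
  rw [step12]
  -- Step 3: evaluate the count
  have hsplit : ((Finset.range q).filter (fun b : ℕ =>
        g * (b : ZMod p) - (τ : ZMod p) = g * (((b + d) % q : ℕ) : ZMod p))).card =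
      ((Finset.range q).filter (fun b : ℕ =>
        (g * (b : ZMod p) - (τ : ZMod p) = g * (((b + d) % q : ℕ) : ZMod p)) ∧ b + d < q)).card +
      ((Finset.range q).filter (fun b : ℕ =>
        (g * (b : ZMod p) - (τ : ZMod p) = g * (((b + d) % q : ℕ) : ZMod p)) ∧ ¬ (b + d < q))).card := by
    rw [← Finset.filter_filter, ← Finset.filter_filter,
      Finset.card_filter_add_card_filter_not]
  rw [hsplit]
  have hiff1 : ∀ b : ℕ, b + d < q →
      ((g * (b : ZMod p) - (τ : ZMod p) = g * (((b + d) % q : ℕ) : ZMod p)) ↔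
        (τ : ZMod p) = -(g * ((d : ℕ) : ZMod p))) := by
    intro b hbd
    rw [Nat.mod_eq_of_lt hbd, Nat.cast_add]
    constructor <;> intro h <;> linear_combination -h
  have hiff2 : ∀ b : ℕ, b < q → ¬ (b + d < q) →
      ((g * (b : ZMod p) - (τ : ZMod p) = g * (((b + d) % q : ℕ) : ZMod p)) ↔
        (τ : ZMod p) = g * ((q : ZMod p) - ((d : ℕ) : ZMod p))) := by
    intro b hbq hbd
    have h1 : (b + d) % q = b + d - q := by
      rw [Nat.mod_eq_sub_mod (by omega)]
      exact Nat.mod_eq_of_lt (by omega)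
    have h2 : ((b + d - q : ℕ) : ZMod p) = (b : ZMod p) + (d : ZMod p) - (q : ZMod p) := by
      rw [Nat.cast_sub (by omega), Nat.cast_add]
    rw [h1, h2]
    constructor <;> intro h <;> linear_combination -h
  have hcard1 : ((Finset.range q).filter (fun b : ℕ =>
        (g * (b : ZMod p) - (τ : ZMod p) = g * (((b + d) % q : ℕ) : ZMod p)) ∧ b + d < q)).card =
      if (τ : ZMod p) = -(g * ((d : ℕ) : ZMod p)) then q - d else 0 := by
    by_cases hc : (τ : ZMod p) = -(g * ((d : ℕ) : ZMod p))
    · rw [if_pos hc]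
      have heq : (Finset.range q).filter (fun b : ℕ =>
          (g * (b : ZMod p) - (τ : ZMod p) = g * (((b + d) % q : ℕ) : ZMod p)) ∧ b + d < q) =
          Finset.range (q - d) := by
        ext b
        simp only [Finset.mem_filter, Finset.mem_range]
        constructor
        · rintro ⟨-, -, hbd⟩; omega
        · intro hb
          have hbd : b + d < q := by omega
          exact ⟨by omega, (hiff1 b hbd).mpr hc, hbd⟩
      rw [heq, Finset.card_range]
    · rw [if_neg hc, Finset.card_eq_zero, Finset.filter_eq_empty_iff]
      rintro b - ⟨hCb, hbd⟩
      exact hc ((hiff1 b hbd).mp hCb)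
  have hcard2 : ((Finset.range q).filter (fun b : ℕ =>
        (g * (b : ZMod p) - (τ : ZMod p) = g * (((b + d) % q : ℕ) : ZMod p)) ∧ ¬ (b + d < q))).card =
      if (τ : ZMod p) = g * ((q : ZMod p) - ((d : ℕ) : ZMod p)) then d else 0 := by
    by_cases hc : (τ : ZMod p) = g * ((q : ZMod p) - ((d : ℕ) : ZMod p))
    · rw [if_pos hc]
      have heq : (Finset.range q).filter (fun b : ℕ =>
          (g * (b : ZMod p) - (τ : ZMod p) = g * (((b + d) % q : ℕ) : ZMod p)) ∧ ¬ (b + d < q)) =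
          Finset.Ico (q - d) q := by
        ext b
        simp only [Finset.mem_filter, Finset.mem_range, Finset.mem_Ico]
        constructor
        · rintro ⟨hb, -, hbd⟩; omega
        · rintro ⟨hb1, hb2⟩
          exact ⟨hb2, (hiff2 b hb2 (by omega)).mpr hc, by omega⟩
      rw [heq, Nat.card_Ico]
      omega
    · rw [if_neg hc, Finset.card_eq_zero, Finset.filter_eq_empty_iff]
      intro b hb
      simp only [Finset.mem_range] at hb
      rintro ⟨hCb, hbd⟩
      exact hc ((hiff2 b hb hbd).mp hCb)
  rw [hcard1, hcard2]

theorem stmt11 (p q : ℕ) (hp : p.Prime) (hq : 0 < q) (hpq : ¬ p ∣ q) :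
    (∀ τ : ℕ, τ < p * q →
      hammingCorr (p * q) (crtSeq p q 0) (crtSeq p q 0) τ = if p ∣ τ then q else 0) ∧
    (∀ g : ZMod p, g ≠ 0 → ∀ τ : ℕ, τ < p * q →
      ((∀ k : ℕ, k < q →
          ((τ : ZMod p), (τ : ZMod q)) = (g * (k : ZMod p), (k : ZMod q)) ∨
          ((τ : ZMod p), (τ : ZMod q)) = (-(g * (k : ZMod p)), -(k : ZMod q)) →
          hammingCorr (p * q) (crtSeq p q g) (crtSeq p q g) τ = q - k) ∧
       ((∀ k : ℕ, k < q →
          ((τ : ZMod p), (τ : ZMod q)) ≠ (g * (k : ZMod p), (k : ZMod q)) ∧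
          ((τ : ZMod p), (τ : ZMod q)) ≠ (-(g * (k : ZMod p)), -(k : ZMod q))) →
          hammingCorr (p * q) (crtSeq p q g) (crtSeq p q g) τ = 0))) := by
  haveI : Fact p.Prime := ⟨hp⟩
  have hq0 : (q : ZMod p) ≠ 0 := fun h => hpq ((ZMod.natCast_eq_zero_iff q p).mp h)
  have castqinj : ∀ a b : ℕ, a < q → b < q → (a : ZMod q) = (b : ZMod q) → a = b := by
    intro a b ha hb h
    have h2 := (ZMod.natCast_eq_natCast_iff _ _ _).mp h
    rwa [Nat.ModEq, Nat.mod_eq_of_lt ha, Nat.mod_eq_of_lt hb] at h2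
  have hkd : ∀ τ : ℕ, τ < p * q →
      τ % q + (p * q - τ) % q = 0 ∨ τ % q + (p * q - τ) % q = q := by
    intro τ hτ
    have h1 : (τ % q + (p * q - τ) % q) % q = 0 := by
      have h2 : τ % q + (p * q - τ) % q ≡ τ + (p * q - τ) [MOD q] :=
        Nat.ModEq.add (Nat.mod_modEq _ _) (Nat.mod_modEq _ _)
      have h3 : τ + (p * q - τ) = p * q := by omega
      rw [Nat.ModEq, h3] at h2
      rw [h2]
      simp [Nat.mul_mod_left]
    obtain ⟨c, hc⟩ := Nat.dvd_of_mod_eq_zero h1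
    have hk : τ % q < q := Nat.mod_lt _ hq
    have hd : (p * q - τ) % q < q := Nat.mod_lt _ hq
    rcases Nat.lt_or_ge c 2 with hc2 | hc2
    · interval_cases c <;> omega
    · exfalso
      have h4 : q * 2 ≤ q * c := Nat.mul_le_mul_left q hc2
      omega
  constructor
  · -- g = 0 case
    intro τ hτ
    rw [crt_master p q hp hq hpq 0 τ hτ]
    have hd : (p * q - τ) % q < q := Nat.mod_lt _ hq
    simp only [zero_mul, neg_zero, ZMod.natCast_eq_zero_iff]
    split_ifs with h <;> omega
  · intro g hg τ hτ
    have hgql : g * ((q : ℕ) : ZMod p) ≠ 0 := mul_ne_zero hg hq0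
    have hk : τ % q < q := Nat.mod_lt _ hq
    have hd : (p * q - τ) % q < q := Nat.mod_lt _ hq
    have hkd' := hkd τ hτ
    have hτq : (τ : ZMod q) = ((τ % q : ℕ) : ZMod q) := (ZMod.natCast_mod τ q).symm
    constructor
    · -- matching case
      intro k' hk' hcond
      rcases hcond with h | h <;> rw [Prod.mk.injEq] at h <;> obtain ⟨h1, h2⟩ := h
      · -- (τ_p, τ_q) = (g k', k')
        have hkk : τ % q = k' := castqinj _ _ hk hk' (by rw [← hτq]; exact h2)
        subst hkk
        rcases hkd' with h0 | h0
        · -- τ % q = 0 and d = 0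
          have hk0 : τ % q = 0 := by omega
          have hd0 : (p * q - τ) % q = 0 := by omega
          have hτp : (τ : ZMod p) = 0 := by rw [h1, hk0]; simp
          rw [crt_master p q hp hq hpq g τ hτ, hd0, hk0]
          simp only [Nat.cast_zero, mul_zero, neg_zero, sub_zero, hτp]
          rw [if_true]
          split_ifs <;> omega
        · -- τ % q + d = q, τ % q > 0
          have hqq : ((q : ℕ) : ZMod p) =
              (((p * q - τ) % q : ℕ) : ZMod p) + ((τ % q : ℕ) : ZMod p) := by
            rw [← Nat.cast_add, (show (p * q - τ) % q + τ % q = q by omega)]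
          rw [crt_master p q hp hq hpq g τ hτ]
          have hcond2 : (τ : ZMod p) =
              g * (((q : ℕ) : ZMod p) - (((p * q - τ) % q : ℕ) : ZMod p)) := by
            rw [hqq, h1]; ring
          have hcond1 : ¬ ((τ : ZMod p) = -(g * (((p * q - τ) % q : ℕ) : ZMod p))) := by
            intro hcontra
            have hz : g * ((q : ℕ) : ZMod p) = 0 := by
              linear_combination g * hqq - h1 + hcontra
            exact hgql hz
          rw [if_neg hcond1, if_pos hcond2]
          omega
      · -- (τ_p, τ_q) = (-(g k'), -k')
        rcases Nat.eq_zero_or_pos k' with hk'0 | hk'pos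
        · subst hk'0
          have hk0 : τ % q = 0 := castqinj _ _ hk hq (by rw [← hτq, h2]; simp)
          have hd0 : (p * q - τ) % q = 0 := by omega
          have hτp : (τ : ZMod p) = 0 := by rw [h1]; simp
          rw [crt_master p q hp hq hpq g τ hτ, hd0]
          simp only [Nat.cast_zero, mul_zero, neg_zero, sub_zero, hτp]
          rw [if_true]
          split_ifs <;> omega
        · have hcast : ((q - k' : ℕ) : ZMod q) = -((k' : ℕ) : ZMod q) := by
            rw [Nat.cast_sub hk'.le]
            simp
          have hkk : τ % q = q - k' := castqinj _ _ hk (by omega) (by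
            rw [← hτq, h2, hcast])
          have hdk : (p * q - τ) % q = k' := by omega
          rw [crt_master p q hp hq hpq g τ hτ, hdk]
          have hcond1 : (τ : ZMod p) = -(g * ((k' : ℕ) : ZMod p)) := h1
          have hcond2 : ¬ ((τ : ZMod p) =
              g * (((q : ℕ) : ZMod p) - ((k' : ℕ) : ZMod p))) := by
            intro hcontra
            have hz : g * ((q : ℕ) : ZMod p) = 0 := by
              linear_combination h1 - hcontra
            exact hgql hz
          rw [if_pos hcond1, if_neg hcond2]
          omega
    · -- non-matching case
      intro hcond
      rw [crt_master p q hp hq hpq g τ hτ]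
      have hτqd : (τ : ZMod q) = -((((p * q - τ) % q : ℕ)) : ZMod q) := by
        have hz : ((τ % q + (p * q - τ) % q : ℕ) : ZMod q) = 0 := by
          rcases hkd' with h0 | h0 <;> rw [h0] <;> simp
        rw [hτq]
        push_cast at hz ⊢
        linear_combination hz
      have hcond1 : ¬ ((τ : ZMod p) = -(g * (((p * q - τ) % q : ℕ) : ZMod p))) := by
        intro hcontra
        exact (hcond _ hd).2 (by rw [Prod.mk.injEq]; exact ⟨hcontra, hτqd⟩)
      rw [if_neg hcond1]
      rcases Nat.eq_zero_or_pos ((p * q - τ) % q) with hd0 | hdpos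
      · split_ifs <;> omega
      · have hcond2 : ¬ ((τ : ZMod p) =
            g * (((q : ℕ) : ZMod p) - (((p * q - τ) % q : ℕ) : ZMod p))) := by
          intro hcontra
          apply (hcond (q - (p * q - τ) % q) (by omega)).1
          rw [Prod.mk.injEq]
          constructor
          · rw [hcontra, Nat.cast_sub hd.le]
          · rw [hτqd, Nat.cast_sub hd.le]
            simp
        rw [if_neg hcond2]
end

section
/- Let p be a prime and q a positive integer not divisible by p. Let g ∈ Z_p with g ≠ 0 and g ≠ 1, let q̄ be the residue of q mod p, and set b_g = (g−1)^{-1}·q̄ mod p. For (τ1, τ2) with τ1 ∈ Z_p and τ2 ∈ {0, 1, …, q−1}, set a_g(τ1, τ2) = (g−1)^{-1}·(τ1 − (τ2 mod p)) mod p. Then H_{g1}(τ1, τ2) equals the number of x ∈ {0, 1, …, q−1} satisfying x ≡ a_g(τ1, τ2) + b_g·I(0 ≤ x < τ2) (mod p), where I(P) equals 1 if P holds and 0 otherwise. -/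
theorem stmt12 (p q : ℕ) (hp : p.Prime) (hq : 0 < q) (hpq : ¬ p ∣ q)
    (g : ZMod p) (hg0 : g ≠ 0) (hg1 : g ≠ 1) (τ1 : ZMod p) (τ2 : ℕ) (hτ2 : τ2 < q) :
    H2 p q g 1 (τ1, (τ2 : ZMod q)) =
      ((Finset.range q).filter (fun x : ℕ =>
        (x : ZMod p) =
          (g - 1)⁻¹ * (τ1 - (τ2 : ZMod p)) +
            (if x < τ2 then (g - 1)⁻¹ * (q : ZMod p) else 0))).card := by
  haveI : NeZero q := ⟨hq.ne'⟩
  haveI := Fact.mk hp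
  have hgsub : g - 1 ≠ 0 := sub_ne_zero.mpr hg1
  have hcanc : (g - 1)⁻¹ * (g - 1) = 1 := inv_mul_cancel₀ hgsub
  have hmodcast : ∀ a b : ℕ, a < q → b < q → (a : ZMod q) = (b : ZMod q) → a = b := by
    intro a b ha hb h
    have := congrArg ZMod.val h
    rwa [ZMod.val_cast_of_lt ha, ZMod.val_cast_of_lt hb] at this
  have key : crtIdx p q g ∩ (crtIdx p q 1).image
        (fun x => x + ((τ1, (τ2 : ZMod q)) : ZMod p × ZMod q))
      = ((Finset.range q).filter (fun x : ℕ =>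
          (x : ZMod p) = (g - 1)⁻¹ * (τ1 - (τ2 : ℕ) : ZMod p) +
            (if x < τ2 then (g - 1)⁻¹ * (q : ZMod p) else 0))).image
          (fun x : ℕ => ((g * x, (x : ZMod q)) : ZMod p × ZMod q)) := by
    ext ⟨u, v⟩
    simp only [crtIdx, Finset.image_image, Finset.mem_inter, Finset.mem_image,
      Finset.mem_filter, Finset.mem_range, Function.comp, Prod.mk.injEq, Prod.mk_add_mk,
      one_mul]
    constructor
    · rintro ⟨⟨t, ht, htu, htv⟩, ⟨s, hs, hsu, hsv⟩⟩
      have hsv' : ((s + τ2 : ℕ) : ZMod q) = (t : ZMod q) := by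
        push_cast; rw [htv, ← hsv]
      have h2 : s + τ2 = t ∨ s + τ2 = t + q := by
        rcases lt_or_ge (s + τ2) q with h | h
        · left; exact hmodcast _ _ h ht hsv'
        · right
          have h3 : s + τ2 - q < q := by omega
          have h4 : ((s + τ2 - q : ℕ) : ZMod q) = (t : ZMod q) := by
            rw [← hsv']
            have h5 : s + τ2 = (s + τ2 - q) + q := by omega
            rw [h5]; push_cast; simp
          have := hmodcast _ _ h3 ht h4
          omega
      have hgt : g * (t : ZMod p) = (s : ZMod p) + τ1 := by rw [htu, ← hsu]
      refine ⟨t, ⟨ht, ?_⟩, htu, htv⟩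
      by_cases hc : t < τ2
      · have hst : s + τ2 = t + q := by omega
        have hstp : (s : ZMod p) + (τ2 : ZMod p) = (t : ZMod p) + (q : ZMod p) := by
          have := congrArg (Nat.cast : ℕ → ZMod p) hst; push_cast at this; exact this
        rw [if_pos hc]
        linear_combination (g - 1)⁻¹ * hgt + (g - 1)⁻¹ * hstp - (t : ZMod p) * hcanc
      · have hst : s + τ2 = t := by omega
        have hstp : (s : ZMod p) + (τ2 : ZMod p) = (t : ZMod p) := by
          have := congrArg (Nat.cast : ℕ → ZMod p) hst; push_cast at this; exact this
        rw [if_neg hc]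
        linear_combination (g - 1)⁻¹ * hgt + (g - 1)⁻¹ * hstp - (t : ZMod p) * hcanc
    · rintro ⟨x, ⟨hx, hxP⟩, hxu, hxv⟩
      refine ⟨⟨x, hx, hxu, hxv⟩, ?_⟩
      by_cases hc : x < τ2
      · rw [if_pos hc] at hxP
        refine ⟨x + q - τ2, by omega, ?_, ?_⟩
        · rw [← hxu]
          have hδ : ((x + q - τ2 : ℕ) : ZMod p) + (τ2 : ZMod p)
              = (x : ZMod p) + (q : ZMod p) := by
            have h5 : (x + q - τ2) + τ2 = x + q := by omega
            have := congrArg (Nat.cast : ℕ → ZMod p) h5; push_cast at this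
            linear_combination this
          have hxq : (g - 1) * (x : ZMod p) = τ1 - (τ2 : ZMod p) + (q : ZMod p) := by
            linear_combination (g - 1) * hxP + (τ1 - (τ2 : ZMod p) + (q : ZMod p)) * hcanc
          linear_combination hδ - hxq
        · rw [← hxv]
          have h5 : (x + q - τ2) + τ2 = x + q := by omega
          have := congrArg (Nat.cast : ℕ → ZMod q) h5; push_cast at this
          rw [ZMod.natCast_self, add_zero] at this
          linear_combination this
      · rw [if_neg hc] at hxP
        refine ⟨x - τ2, by omega, ?_, ?_⟩
        · rw [← hxu]
          have hδ : ((x - τ2 : ℕ) : ZMod p) + (τ2 : ZMod p) = (x : ZMod p) := by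
            have h5 : (x - τ2) + τ2 = x := by omega
            have := congrArg (Nat.cast : ℕ → ZMod p) h5; push_cast at this
            linear_combination this
          have hxq : (g - 1) * (x : ZMod p) = τ1 - (τ2 : ZMod p) := by
            linear_combination (g - 1) * hxP + (τ1 - (τ2 : ZMod p)) * hcanc
          linear_combination hδ - hxq
        · rw [← hxv]
          have h5 : (x - τ2) + τ2 = x := by omega
          have := congrArg (Nat.cast : ℕ → ZMod q) h5; push_cast at this
          linear_combination this
  rw [H2, key, Finset.card_image_of_injOn]
  intro x hx y hy hxy
  simp only [Finset.coe_filter, Set.mem_setOf_eq, Finset.mem_range] at hx hy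
  have := congrArg Prod.snd hxy
  exact hmodcast _ _ hx.1 hy.1 this
end

section
/- Let p be a prime and q a positive integer not divisible by p with q > p, and let g ∈ Z_p with g ≠ 0 and g ≠ 1. If τ1 = τ1' in Z_p and τ2 ≡ τ2' (mod p) (with τ2, τ2' ∈ Z_q), then H_{g1}(τ1, τ2) = H_{g1}(τ1', τ2'); that is, H_{g1}(τ1, τ2) depends on τ2 only through its residue modulo p. -/
open Finset


lemma count_Ico_one (p r n : ℕ) (hp : 0 < p) (hr : r < p) :
    ((Finset.Ico n (n + p)).filter (fun a => a % p = r)).card = 1 := by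
  rw [Finset.card_eq_one]
  refine ⟨p * ((n + p - 1 - r) / p) + r, ?_⟩
  have hd := Nat.div_add_mod (n + p - 1 - r) p
  have hm : (n + p - 1 - r) % p < p := Nat.mod_lt _ hp
  have hmod : (p * ((n + p - 1 - r) / p) + r) % p = r := by
    rw [Nat.mul_add_mod]; exact Nat.mod_eq_of_lt hr
  ext a
  simp only [Finset.mem_filter, Finset.mem_Ico, Finset.mem_singleton]
  constructor
  · rintro ⟨⟨h1, h2⟩, h3⟩
    have heq : a % p = (p * ((n + p - 1 - r) / p) + r) % p := by rw [hmod, h3]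
    rcases le_total a (p * ((n + p - 1 - r) / p) + r) with hle | hle
    · have hdvd : p ∣ (p * ((n + p - 1 - r) / p) + r) - a := (Nat.modEq_iff_dvd' hle).mp heq
      have := Nat.eq_zero_of_dvd_of_lt hdvd
      omega
    · have hdvd : p ∣ a - (p * ((n + p - 1 - r) / p) + r) := (Nat.modEq_iff_dvd' hle).mp heq.symm
      have := Nat.eq_zero_of_dvd_of_lt hdvd
      omega
  · rintro rfl
    exact ⟨⟨by omega, by omega⟩, hmod⟩

lemma count_Ico_blk (p r m k : ℕ) (hp : 0 < p) (hr : r < p) :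
    ((Finset.Ico m (m + p * k)).filter (fun a => a % p = r)).card = k := by
  induction k with
  | zero => simp
  | succ k ih =>
    have hsplit : Finset.Ico m (m + p * (k + 1)) =
        Finset.Ico m (m + p * k) ∪ Finset.Ico (m + p * k) (m + p * k + p) := by
      rw [Finset.Ico_union_Ico_eq_Ico (by omega) (by omega)]
      congr 1; ring
    rw [hsplit, Finset.filter_union, Finset.card_union_of_disjoint
      ((Finset.Ico_disjoint_Ico_consecutive m (m + p * k) (m + p * k + p)).mono
        (Finset.filter_subset _ _) (Finset.filter_subset _ _)),
      ih, count_Ico_one p r _ hp hr]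

lemma split_card (p r a b c : ℕ) (hab : a ≤ b) (hbc : b ≤ c) :
    ((Finset.Ico a c).filter (fun x => x % p = r)).card =
    ((Finset.Ico a b).filter (fun x => x % p = r)).card +
    ((Finset.Ico b c).filter (fun x => x % p = r)).card := by
  rw [← Finset.Ico_union_Ico_eq_Ico hab hbc, Finset.filter_union,
    Finset.card_union_of_disjoint ((Finset.Ico_disjoint_Ico_consecutive a b c).mono
      (Finset.filter_subset _ _) (Finset.filter_subset _ _))]

lemma F_split (p q r1 r2 S : ℕ) (hS : S ≤ q) :
    ((Finset.range q).filter (fun a => if S ≤ a then a % p = r1 else a % p = r2)).card =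
    ((Finset.Ico 0 S).filter (fun a => a % p = r2)).card +
    ((Finset.Ico S q).filter (fun a => a % p = r1)).card := by
  rw [Finset.range_eq_Ico, ← Finset.Ico_union_Ico_eq_Ico (Nat.zero_le S) hS,
    Finset.filter_union,
    Finset.card_union_of_disjoint ((Finset.Ico_disjoint_Ico_consecutive 0 S q).mono
      (Finset.filter_subset _ _) (Finset.filter_subset _ _))]
  congr 1
  · apply congrArg
    apply Finset.filter_congr
    intro x hx
    simp only [Finset.mem_Ico] at hx
    simp [if_neg (by omega : ¬ S ≤ x)]
  · apply congrArg
    apply Finset.filter_congr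
    intro x hx
    simp only [Finset.mem_Ico] at hx
    simp [if_pos hx.1]

lemma F_eq (p q r1 r2 T T' : ℕ) (hp : 0 < p) (hr1 : r1 < p) (hr2 : r2 < p)
    (hT : T ≤ q) (hT' : T' ≤ q) (h : T % p = T' % p) :
    ((Finset.range q).filter (fun a => if T ≤ a then a % p = r1 else a % p = r2)).card =
    ((Finset.range q).filter (fun a => if T' ≤ a then a % p = r1 else a % p = r2)).card := by
  wlog hle : T ≤ T' generalizing T T'
  · exact (this T' T hT' hT h.symm (by omega)).symm
  obtain ⟨k, hk⟩ : ∃ k, T' = T + p * k := by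
    have hdvd : p ∣ T' - T := (Nat.modEq_iff_dvd' hle).mp h
    obtain ⟨k, hk⟩ := hdvd
    exact ⟨k, by omega⟩
  subst hk
  rw [F_split p q r1 r2 T hT, F_split p q r1 r2 _ hT']
  rw [split_card p r2 0 T (T + p * k) (Nat.zero_le T) (by omega),
    split_card p r1 T (T + p * k) q (by omega) hT']
  rw [count_Ico_blk p r2 T k hp hr2, count_Ico_blk p r1 T k hp hr1]
  omega

lemma crtIdx_eq' (p q : ℕ) [NeZero q] (g : ZMod p) :
    crtIdx p q g = Finset.univ.image (fun u : ZMod q => (g * ((u.val : ℕ) : ZMod p), u)) := by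
  unfold crtIdx
  ext x
  simp only [mem_image, mem_range, mem_univ, true_and]
  constructor
  · rintro ⟨t, ht, rfl⟩
    exact ⟨(t : ZMod q), by rw [ZMod.val_natCast_of_lt ht]⟩
  · rintro ⟨u, rfl⟩
    exact ⟨u.val, u.val_lt, by rw [ZMod.natCast_rightInverse u]⟩

lemma H2_count' (p q : ℕ) [NeZero q] (g : ZMod p) (τ1 : ZMod p) (τ2 : ZMod q) :
    H2 p q g 1 (τ1, τ2) =
    (Finset.univ.filter (fun u : ZMod q =>
      g * ((u.val : ℕ) : ZMod p) = (((u - τ2).val : ℕ) : ZMod p) + τ1)).card := by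
  unfold H2
  rw [crtIdx_eq', crtIdx_eq']
  have himg : (Finset.univ.image (fun u : ZMod q => (g * ((u.val : ℕ) : ZMod p), u))) ∩
      ((Finset.univ.image (fun u : ZMod q => ((1 : ZMod p) * ((u.val : ℕ) : ZMod p), u))).image
        (fun x => x + (τ1, τ2))) =
      (Finset.univ.filter (fun u : ZMod q =>
        g * ((u.val : ℕ) : ZMod p) = (((u - τ2).val : ℕ) : ZMod p) + τ1)).image
        (fun u : ZMod q => (g * ((u.val : ℕ) : ZMod p), u)) := by
    ext x
    simp only [mem_inter, mem_image, mem_filter, mem_univ, true_and, one_mul]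
    constructor
    · rintro ⟨⟨u, rfl⟩, ⟨y, ⟨v, rfl⟩, hy⟩⟩
      have h2 : v + τ2 = u := congrArg Prod.snd hy
      have h1 : ((v.val : ℕ) : ZMod p) + τ1 = g * ((u.val : ℕ) : ZMod p) := congrArg Prod.fst hy
      have hv : v = u - τ2 := by rw [← h2]; ring
      exact ⟨u, by rw [← h1, hv], rfl⟩
    · rintro ⟨u, hu, rfl⟩
      refine ⟨⟨u, rfl⟩, ⟨_, ⟨u - τ2, rfl⟩, ?_⟩⟩
      rw [Prod.mk_add_mk, ← hu, sub_add_cancel]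
  rw [himg, Finset.card_image_of_injective _ (fun a b hab => congrArg Prod.snd hab)]

lemma val_sub_eq' (q : ℕ) [NeZero q] (a : ℕ) (ha : a < q) (τ : ZMod q) :
    ((a : ZMod q) - τ).val = if τ.val ≤ a then a - τ.val else a + q - τ.val := by
  have hτ : τ.val < q := τ.val_lt
  rw [sub_eq_add_neg, ZMod.val_add, ZMod.neg_val', ZMod.val_natCast_of_lt ha]
  by_cases h0 : τ.val = 0
  · rw [h0]
    simp [Nat.mod_self, Nat.mod_eq_of_lt ha]
  · rw [Nat.mod_eq_of_lt (a := q - τ.val) (by omega)]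
    by_cases hle : τ.val ≤ a
    · rw [if_pos hle, show a + (q - τ.val) = q + (a - τ.val) by omega,
        Nat.add_mod_left, Nat.mod_eq_of_lt (by omega)]
    · rw [if_neg hle, Nat.mod_eq_of_lt (by omega)]
      omega

lemma count_univ_eq_range' (q : ℕ) [NeZero q] (P : ZMod q → Prop) [DecidablePred P] :
    (Finset.univ.filter P).card = ((Finset.range q).filter (fun a : ℕ => P ((a : ℕ) : ZMod q))).card := by
  apply Finset.card_bij (fun (u : ZMod q) _ => u.val)
  · intro u hu
    simp only [mem_filter, mem_range]
    refine ⟨u.val_lt, ?_⟩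
    rw [ZMod.natCast_rightInverse u]
    exact (mem_filter.mp hu).2
  · intro a _ b _ hab
    exact ZMod.val_injective q hab
  · intro a ha
    simp only [mem_filter, mem_range] at ha
    exact ⟨(a : ZMod q), mem_filter.mpr ⟨mem_univ _, ha.2⟩, ZMod.val_natCast_of_lt ha.1⟩

lemma natCast_eq_iff_mod' (p : ℕ) [NeZero p] (a : ℕ) (c : ZMod p) :
    (a : ZMod p) = c ↔ a % p = c.val := by
  rw [← ZMod.val_natCast]
  exact ⟨fun hh => by rw [hh], fun hh => ZMod.val_injective p hh⟩

lemma H2_range_count (p q : ℕ) [NeZero p] [NeZero q] (hp : p.Prime)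
    (g : ZMod p) (hg1 : g ≠ 1) (τ1 : ZMod p) (τ : ZMod q) :
    H2 p q g 1 (τ1, τ) =
    ((Finset.range q).filter (fun a : ℕ =>
      if τ.val ≤ a then a % p = ((g - 1)⁻¹ * (τ1 - ((τ.val : ℕ) : ZMod p))).val
      else a % p = ((g - 1)⁻¹ * (τ1 + ((q - τ.val : ℕ) : ZMod p))).val)).card := by
  haveI := Fact.mk hp
  have hgne : g - 1 ≠ 0 := sub_ne_zero.mpr hg1
  rw [H2_count', count_univ_eq_range']
  apply congrArg
  apply Finset.filter_congr
  intro a ha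
  rw [mem_range] at ha
  have hτq : τ.val < q := τ.val_lt
  rw [ZMod.val_natCast_of_lt ha, val_sub_eq' q a ha τ]
  by_cases hle : τ.val ≤ a
  · rw [if_pos hle, if_pos hle, Nat.cast_sub hle]
    rw [show (g * (a : ZMod p) = (a : ZMod p) - ((τ.val : ℕ) : ZMod p) + τ1) ↔
        ((a : ZMod p) = (g - 1)⁻¹ * (τ1 - ((τ.val : ℕ) : ZMod p))) from ?_,
      natCast_eq_iff_mod']
    rw [eq_inv_mul_iff_mul_eq₀ hgne]
    constructor <;> intro hh <;> linear_combination hh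
  · rw [if_neg hle, if_neg hle,
      show a + q - τ.val = a + (q - τ.val) by omega, Nat.cast_add]
    rw [show (g * (a : ZMod p) = (a : ZMod p) + ((q - τ.val : ℕ) : ZMod p) + τ1) ↔
        ((a : ZMod p) = (g - 1)⁻¹ * (τ1 + ((q - τ.val : ℕ) : ZMod p))) from ?_,
      natCast_eq_iff_mod']
    rw [eq_inv_mul_iff_mul_eq₀ hgne]
    constructor <;> intro hh <;> linear_combination hh

theorem stmt13 (p q : ℕ) (hp : p.Prime) (hpq : ¬ p ∣ q) (hqp : p < q)
    (g : ZMod p) (hg0 : g ≠ 0) (hg1 : g ≠ 1)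
    (τ1 : ZMod p) (τ2 τ2' : ZMod q) (h : τ2.val % p = τ2'.val % p) :
    H2 p q g 1 (τ1, τ2) = H2 p q g 1 (τ1, τ2') := by
  haveI : NeZero p := ⟨hp.ne_zero⟩
  haveI : NeZero q := ⟨by have := hp.two_le; omega⟩
  rw [H2_range_count p q hp g hg1 τ1 τ2, H2_range_count p q hp g hg1 τ1 τ2']
  have hTT : ((τ2.val : ℕ) : ZMod p) = ((τ2'.val : ℕ) : ZMod p) := by
    rw [← ZMod.natCast_mod τ2.val p, ← ZMod.natCast_mod τ2'.val p, h]
  have hqT : ((q - τ2.val : ℕ) : ZMod p) = ((q - τ2'.val : ℕ) : ZMod p) := by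
    rw [Nat.cast_sub τ2.val_lt.le, Nat.cast_sub τ2'.val_lt.le, hTT]
  rw [← hTT, ← hqT]
  exact F_eq p q _ _ τ2.val τ2'.val hp.pos (ZMod.val_lt _) (ZMod.val_lt _)
    τ2.val_lt.le τ2'.val_lt.le h
end

section
/- Let p be a prime and q a positive integer not divisible by p. Let g, h ∈ Z_p with h ≠ 0. Then for every (τ1, τ2) ∈ Z_p ⊕ Z_q, H_{gh}(τ1, τ2) = H_{g·h^{-1}, 1}(h^{-1}·τ1, τ2), where h^{-1} and the products are computed in Z_p. In particular, the distribution of Hamming cross-correlation values between s_g and s_h (over all delay offsets) equals that between s_{g·h^{-1}} and s_1. -/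
theorem stmt15 (p q : ℕ) (hp : p.Prime) (hq : 0 < q) (hpq : ¬ p ∣ q)
    (g h : ZMod p) (hh : h ≠ 0) :
    (∀ τ : ZMod p × ZMod q, H2 p q g h τ = H2 p q (g * h⁻¹) 1 (h⁻¹ * τ.1, τ.2)) ∧
    (∀ j : ℕ,
      ((Finset.range p ×ˢ Finset.range q).filter
        (fun τ => H2 p q g h ((τ.1 : ZMod p), (τ.2 : ZMod q)) = j)).card =
      ((Finset.range p ×ˢ Finset.range q).filter
        (fun τ => H2 p q (g * h⁻¹) 1 ((τ.1 : ZMod p), (τ.2 : ZMod q)) = j)).card) := by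
  haveI := Fact.mk hp
  have hinv : h⁻¹ ≠ 0 := inv_ne_zero hh
  set φ : ZMod p × ZMod q → ZMod p × ZMod q := fun x => (h⁻¹ * x.1, x.2) with hφ
  have hinj : Function.Injective φ := by
    intro a b hab
    simp only [hφ, Prod.mk.injEq] at hab
    exact Prod.ext (mul_left_cancel₀ hinv hab.1) hab.2
  have himg : ∀ g' : ZMod p, (crtIdx p q g').image φ = crtIdx p q (h⁻¹ * g') := by
    intro g'
    simp only [crtIdx, Finset.image_image]
    congr 1
    funext t
    simp [hφ, mul_assoc]
  have hadd : ∀ (τ : ZMod p × ZMod q) (x : ZMod p × ZMod q), φ (x + τ) = φ x + φ τ := by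
    intro τ x
    simp [hφ, mul_add]
  have hmain : ∀ τ : ZMod p × ZMod q,
      H2 p q g h τ = H2 p q (g * h⁻¹) 1 (h⁻¹ * τ.1, τ.2) := by
    intro τ
    have h1 : ((crtIdx p q h).image (fun x => x + τ)).image φ
        = (crtIdx p q 1).image (fun x => x + φ τ) := by
      rw [Finset.image_image]
      have : φ ∘ (fun x => x + τ) = (fun x => x + φ τ) ∘ φ := by
        funext x; simp [hadd]
      rw [this, ← Finset.image_image, himg h, inv_mul_cancel₀ hh]
    have h2 : H2 p q g h τ
        = ((crtIdx p q g ∩ (crtIdx p q h).image (fun x => x + τ)).image φ).card := by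
      rw [Finset.card_image_of_injective _ hinj]; rfl
    rw [h2, Finset.image_inter _ _ hinj, h1, himg g]
    have : h⁻¹ * g = g * h⁻¹ := mul_comm _ _
    rw [this]
    rfl
  refine ⟨hmain, fun j => ?_⟩
  apply Finset.card_bij (fun τ _ => (((h⁻¹ * (τ.1 : ZMod p)).val), τ.2))
  · intro τ hτ
    simp only [Finset.mem_filter, Finset.mem_product, Finset.mem_range] at hτ ⊢
    refine ⟨⟨ZMod.val_lt _, hτ.1.2⟩, ?_⟩
    rw [ZMod.natCast_val, ZMod.cast_id]
    exact (hmain ((τ.1 : ZMod p), (τ.2 : ZMod q))).symm.trans hτ.2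
  · intro a ha b hb hab
    simp only [Finset.mem_filter, Finset.mem_product, Finset.mem_range] at ha hb
    have h1 : (h⁻¹ * (a.1 : ZMod p)) = (h⁻¹ * (b.1 : ZMod p)) := by
      have := congrArg Prod.fst hab
      simpa using ZMod.val_injective p this
    have h1' : (a.1 : ZMod p) = (b.1 : ZMod p) := mul_left_cancel₀ hinv h1
    have ha1 : a.1 = b.1 := by
      have := congrArg (ZMod.val) h1'
      rwa [ZMod.val_cast_of_lt ha.1.1, ZMod.val_cast_of_lt hb.1.1] at this
    have h2 := congrArg Prod.snd hab
    exact Prod.ext ha1 h2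
  · intro σ hσ
    simp only [Finset.mem_filter, Finset.mem_product, Finset.mem_range] at hσ
    refine ⟨((h * (σ.1 : ZMod p)).val, σ.2), ?_, ?_⟩
    · simp only [Finset.mem_filter, Finset.mem_product, Finset.mem_range]
      refine ⟨⟨ZMod.val_lt _, hσ.1.2⟩, ?_⟩
      rw [hmain]
      have : (((h * (σ.1 : ZMod p)).val : ℕ) : ZMod p) = h * (σ.1 : ZMod p) := by
        rw [ZMod.natCast_val, ZMod.cast_id]
      rw [this, ← mul_assoc, inv_mul_cancel₀ hh, one_mul]
      exact hσ.2
    · simp only [ZMod.natCast_val, ZMod.cast_id, ← mul_assoc, inv_mul_cancel₀ hh, one_mul]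
      rw [ZMod.val_cast_of_lt hσ.1.1]
end

section
/- Let p be a prime and q a positive integer relatively prime to p with q > 2p², and let γ be the multiplicative inverse of p modulo q (γ·p ≡ 1 (mod q)). Then for every k ∈ {1, 2, …, p−1}, the residue of k·γ modulo q satisfies 2p < (k·γ mod q) ≤ q − 2p. -/
theorem stmt16 (p q γ : ℕ) (hp : p.Prime) (hcop : Nat.Coprime p q)
    (hq : 2 * p ^ 2 < q) (hγ : γ * p % q = 1)
    (k : ℕ) (hk1 : 1 ≤ k) (hk2 : k ≤ p - 1) :
    2 * p < k * γ % q ∧ k * γ % q ≤ q - 2 * p := by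
  have hp2 : 2 ≤ p := hp.two_le
  have hpq : p < q := by nlinarith
  have hq0 : 0 < q := by omega
  have hkq : k < q := by omega
  set r := k * γ % q with hr
  have hrq : r < q := Nat.mod_lt _ hq0
  have key : r * p % q = k := by
    rw [hr, Nat.mod_mul_mod, mul_assoc, Nat.mul_mod, hγ, mul_one]
    simp [Nat.mod_eq_of_lt hkq]
  constructor
  · by_contra h
    push_neg at h
    have h1 : r * p < q := by nlinarith
    have h2 : r * p = k := by rw [← key, Nat.mod_eq_of_lt h1]
    have hr1 : 1 ≤ r := by
      rcases Nat.eq_zero_or_pos r with h0 | h0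
      · simp [h0] at h2; omega
      · exact h0
    have hle : p ≤ r * p := Nat.le_mul_of_pos_left p hr1
    rw [h2] at hle
    omega
  · by_contra h
    push_neg at h
    set s := q - r with hs
    have hs2 : s < 2 * p := by omega
    have hs1 : 1 ≤ s := by omega
    have h1 : (s * p + r * p) % q = 0 := by
      have : s * p + r * p = q * p := by
        rw [← add_mul]; congr 1; omega
      rw [this, Nat.mul_mod_right]
    have h2 : (s * p + k) % q = 0 := by
      rw [Nat.add_mod (s * p) (r * p), key] at h1
      rw [Nat.add_mod (s * p) k, Nat.mod_eq_of_lt hkq, h1]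
    have hdiv : q ∣ s * p + k := Nat.dvd_of_mod_eq_zero h2
    have hpos : 0 < s * p + k := by omega
    have := Nat.le_of_dvd hpos hdiv
    have hkp : k < p := by omega
    have hm : (s + 1) * p ≤ 2 * p * p := by
      exact Nat.mul_le_mul_right p (by omega)
    nlinarith [hm, hkp]
end

section
/- Let p be a prime and q a positive integer relatively prime to p with q > 2p², let γ be the multiplicative inverse of p modulo q, and let S' = Φ'_{p,q}({0, 1, …, p²−1}) ⊆ Z_p ⊕ Z_q. Then for any g, h ∈ Z_p with g ≠ h and any (τ1, τ2) ∈ Z_p ⊕ Z_q, |I_{g,p,q} ∩ (I_{h,p,q} + (τ1, τ2)) ∩ S'| ≤ 2. -/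
/-- The modified CRT correspondence `Φ'_{p,q}(x) = (x mod p, γ·x mod q)`. -/
def crtPhi' (p q γ : ℕ) (x : ℕ) : ZMod p × ZMod q :=
  ((x : ZMod p), ((γ * x : ℕ) : ZMod q))

theorem stmt17 (p q γ : ℕ) (hp : p.Prime) (hcop : Nat.Coprime p q)
    (hq : 2 * p ^ 2 < q) (hγ : γ * p % q = 1)
    (g h : ZMod p) (hgh : g ≠ h) (τ : ZMod p × ZMod q) :
    (crtIdx p q g ∩ (crtIdx p q h).image (fun x => x + τ) ∩
      (Finset.range (p ^ 2)).image (crtPhi' p q γ)).card ≤ 2 := by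
  haveI : Fact p.Prime := ⟨hp⟩
  have hp2 : 2 ≤ p := hp.two_le
  have hpsq : 0 < p ^ 2 := pow_pos hp.pos 2
  have hq0 : 0 < q := by omega
  haveI : NeZero q := ⟨by omega⟩
  set S := crtIdx p q g ∩ (crtIdx p q h).image (fun x => x + τ) ∩
      (Finset.range (p ^ 2)).image (crtPhi' p q γ) with hS
  have hvq : ∀ a : ZMod q, ((a.val : ℕ) : ZMod q) = a := fun a => by
    simp [ZMod.natCast_val, ZMod.cast_id]
  have hγmod : (γ * p) % q = 1 % q := by rw [hγ, Nat.mod_eq_of_lt (by omega)]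
  -- key structure of elements of S
  have key : ∀ z ∈ S, z.1 = g * ((z.2.val : ℕ) : ZMod p) ∧
      z.1 = h * (((z.2 - τ.2).val : ℕ) : ZMod p) + τ.1 ∧
      ∃ x k : ℕ, x < p ^ 2 ∧ k < p ∧ p * z.2.val = q * k + x ∧
        (x : ZMod p) = z.1 := by
    intro z hz
    rw [hS, Finset.mem_inter, Finset.mem_inter] at hz
    obtain ⟨⟨hzA, hzB⟩, hzC⟩ := hz
    simp only [crtIdx, crtPhi', Finset.mem_image, Finset.mem_range] at hzA hzB hzC
    obtain ⟨t, ht, hteq⟩ := hzA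
    obtain ⟨w, ⟨s, hs, hseq⟩, hweq⟩ := hzB
    obtain ⟨x, hx, hxeq⟩ := hzC
    have hz2 : z.2 = (t : ZMod q) := by rw [← hteq]
    have hz1 : z.1 = g * (t : ZMod p) := by rw [← hteq]
    have htval : z.2.val = t := by rw [hz2, ZMod.val_cast_of_lt ht]
    have hz2s : z.2 = (s : ZMod q) + τ.2 := by rw [← hweq, ← hseq]; rfl
    have hz1s : z.1 = h * (s : ZMod p) + τ.1 := by rw [← hweq, ← hseq]; rfl
    have hsval : (z.2 - τ.2).val = s := by
      rw [hz2s, add_sub_cancel_right, ZMod.val_cast_of_lt hs]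
    have hz2x : z.2 = ((γ * x : ℕ) : ZMod q) := by rw [← hxeq]
    have hz1x : z.1 = (x : ZMod p) := by rw [← hxeq]
    refine ⟨by rw [htval]; exact hz1, by rw [hsval]; exact hz1s, x, p * t / q, hx, ?_, ?_, hz1x.symm⟩
    · exact Nat.div_lt_of_lt_mul (by nlinarith)
    · -- p * t = q * (p*t/q) + x , using x = (p*t) % q
      have htm : t ≡ γ * x [MOD q] :=
        (ZMod.natCast_eq_natCast_iff _ _ _).mp (by rw [← hz2, hz2x])
      have hpt : p * t ≡ x [MOD q] := by
        calc p * t ≡ p * (γ * x) [MOD q] := htm.mul_left p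
          _ = (γ * p) * x := by ring
          _ ≡ 1 * x [MOD q] := Nat.ModEq.mul_right x hγmod
          _ = x := one_mul x
      have hxm : (p * t) % q = x := by
        have h' : (p * t) % q = x % q := hpt
        rwa [Nat.mod_eq_of_lt (show x < q by omega)] at h'
      rw [htval, ← hxm]
      exact (Nat.div_add_mod (p * t) q).symm
  -- map each element to its "wraparound" value; at most two possibilities
  have hcard := Finset.card_le_card_of_injOn
    (f := fun z : ZMod p × ZMod q => ((z.2 - τ.2).val : ℤ) - (z.2.val : ℤ) + (τ.2.val : ℤ))
    (s := S) (t := ({0, (q : ℤ)} : Finset ℤ)) ?_ ?_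
  · refine hcard.trans ?_
    refine (Finset.card_insert_le _ _).trans ?_
    simp
  · -- maps to {0, q}
    intro z _
    have e0 : ((((z.2 - τ.2).val : ℤ) - (z.2.val : ℤ) + (τ.2.val : ℤ) : ℤ) : ZMod q) = 0 := by
      push_cast
      rw [hvq, hvq, hvq]
      ring
    obtain ⟨c, hc⟩ := (ZMod.intCast_zmod_eq_zero_iff_dvd _ q).mp e0
    have b1 : (z.2 - τ.2).val < q := ZMod.val_lt _
    have b2 : z.2.val < q := ZMod.val_lt _
    have b3 : τ.2.val < q := ZMod.val_lt _
    have hc01 : c = 0 ∨ c = 1 := by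
      by_contra hcc
      push_neg at hcc
      have : c ≤ -1 ∨ 2 ≤ c := by omega
      rcases this with h' | h' <;> nlinarith [hc]
    simp only [Finset.mem_coe, Finset.mem_insert, Finset.mem_singleton]
    rcases hc01 with rfl | rfl
    · left; omega
    · right; omega
  · -- injective on S
    intro z1 hz1 z2 hz2 hf
    obtain ⟨A1, B1, x1, k1, hx1, hk1, hd1, hc1⟩ := key z1 hz1
    obtain ⟨A2, B2, x2, k2, hx2, hk2, hd2, hc2⟩ := key z2 hz2
    have hf' : ((z1.2 - τ.2).val : ℤ) - (z1.2.val : ℤ) + (τ.2.val : ℤ)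
        = ((z2.2 - τ.2).val : ℤ) - (z2.2.val : ℤ) + (τ.2.val : ℤ) := hf
    -- s1 - s2 = t1 - t2 over ℤ
    have hst : ((z1.2 - τ.2).val : ℤ) - ((z2.2 - τ.2).val : ℤ)
        = (z1.2.val : ℤ) - (z2.2.val : ℤ) := by omega
    have hZ : (((z1.2 - τ.2).val : ZMod p)) - ((z2.2 - τ.2).val : ZMod p)
        = ((z1.2.val : ZMod p)) - ((z2.2.val : ZMod p)) := by
      have : ((((z1.2 - τ.2).val : ℤ) - ((z2.2 - τ.2).val : ℤ) : ℤ) : ZMod p)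
          = (((z1.2.val : ℤ) - (z2.2.val : ℤ) : ℤ) : ZMod p) := by rw [hst]
      push_cast at this
      exact this
    have hA1 : g * ((z1.2.val : ℕ) : ZMod p)
        = h * (((z1.2 - τ.2).val : ℕ) : ZMod p) + τ.1 := by rw [← A1, B1]
    have hA2 : g * ((z2.2.val : ℕ) : ZMod p)
        = h * (((z2.2 - τ.2).val : ℕ) : ZMod p) + τ.1 := by rw [← A2, B2]
    have h0 : (g - h) * (((z1.2.val : ℕ) : ZMod p) - ((z2.2.val : ℕ) : ZMod p)) = 0 := by
      linear_combination hA1 - hA2 + h * hZ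
    have ht12 : ((z1.2.val : ℕ) : ZMod p) = ((z2.2.val : ℕ) : ZMod p) :=
      sub_eq_zero.mp ((mul_eq_zero.mp h0).resolve_left (sub_ne_zero_of_ne hgh))
    have hdvd : (p : ℤ) ∣ (z1.2.val : ℤ) - (z2.2.val : ℤ) := by
      apply (ZMod.intCast_zmod_eq_zero_iff_dvd _ p).mp
      push_cast
      exact sub_eq_zero_of_eq ht12
    -- k1 = k2
    have C1 : ((q * k1 + x1 : ℕ) : ZMod p) = 0 := by
      rw [← hd1]; push_cast; simp [ZMod.natCast_self]
    have C2 : ((q * k2 + x2 : ℕ) : ZMod p) = 0 := by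
      rw [← hd2]; push_cast; simp [ZMod.natCast_self]
    push_cast at C1 C2
    have hx1' : (x1 : ZMod p) = g * ((z1.2.val : ℕ) : ZMod p) := hc1.trans A1
    have hx2' : (x2 : ZMod p) = g * ((z2.2.val : ℕ) : ZMod p) := hc2.trans A2
    have hk0 : (q : ZMod p) * ((k1 : ZMod p) - (k2 : ZMod p)) = 0 := by
      linear_combination C1 - C2 - hx1' + hx2' - g * ht12
    have hqne : (q : ZMod p) ≠ 0 := by
      rw [Ne, ZMod.natCast_eq_zero_iff]
      exact hp.coprime_iff_not_dvd.mp hcop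
    have hk12 : (k1 : ZMod p) = (k2 : ZMod p) :=
      sub_eq_zero.mp ((mul_eq_zero.mp hk0).resolve_left hqne)
    have hkeq : k1 = k2 := by
      have hmod : k1 % p = k2 % p := (ZMod.natCast_eq_natCast_iff' _ _ _).mp hk12
      rwa [Nat.mod_eq_of_lt hk1, Nat.mod_eq_of_lt hk2] at hmod
    -- conclude t1 = t2
    obtain ⟨m, hm⟩ := hdvd
    have e1 : (p : ℤ) * (z1.2.val : ℤ) = (q : ℤ) * k1 + x1 := by exact_mod_cast hd1
    have e2 : (p : ℤ) * (z2.2.val : ℤ) = (q : ℤ) * k2 + x2 := by exact_mod_cast hd2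
    rw [hkeq] at e1
    have hxx : (x1 : ℤ) - (x2 : ℤ) = (p : ℤ) ^ 2 * m := by
      linear_combination (p : ℤ) * hm - e1 + e2
    have hx1z : (x1 : ℤ) < (p : ℤ) ^ 2 := by exact_mod_cast hx1
    have hx2z : (x2 : ℤ) < (p : ℤ) ^ 2 := by exact_mod_cast hx2
    have hx1n : (0 : ℤ) ≤ (x1 : ℤ) := Int.natCast_nonneg _
    have hx2n : (0 : ℤ) ≤ (x2 : ℤ) := Int.natCast_nonneg _
    have hp2z : (0 : ℤ) < (p : ℤ) ^ 2 := by positivity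
    have hbl : -((p : ℤ) ^ 2) < (p : ℤ) ^ 2 * m := by rw [← hxx]; linarith
    have hbu : (p : ℤ) ^ 2 * m < (p : ℤ) ^ 2 := by rw [← hxx]; linarith
    have hmlt : m < 1 := by
      by_contra hcon
      push_neg at hcon
      have := mul_le_mul_of_nonneg_left hcon (le_of_lt hp2z)
      rw [mul_one] at this
      linarith
    have hmgt : -1 < m := by
      by_contra hcon
      push_neg at hcon
      have := mul_le_mul_of_nonneg_left hcon (le_of_lt hp2z)
      rw [mul_neg_one] at this
      linarith
    have hm0 : m = 0 := by omega
    rw [hm0, mul_zero] at hm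
    have hteq : z1.2.val = z2.2.val := by omega
    have h2eq : z1.2 = z2.2 := ZMod.val_injective q hteq
    have h1eq : z1.1 = z2.1 := by rw [A1, A2, h2eq]
    exact Prod.ext h1eq h2eq
end

section
/- Let p be a prime and q a positive integer relatively prime to p with q > 2p², and let γ be the multiplicative inverse of p modulo q. For each g ∈ {1, 2, …, p−1}, the modified CRT sequence s_g has exactly p ones among its first p² entries, i.e., |{t ∈ {0, 1, …, p²−1} : s_g(t) = 1}| = p. -/
/-- The modified CRT sequence: `s_g(t) = 1` iff `Φ'_{p,q}(t) = (t mod p, γt mod q) ∈ I_{g,p,q}`. -/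
def crtSeq' (p q γ : ℕ) (g : ZMod p) (t : ℕ) : ℕ :=
  if ((t : ZMod p), ((γ * t : ℕ) : ZMod q)) ∈ crtIdx p q g then 1 else 0

/- Auxiliary definitions for the bijection. -/
def fA (p q m : ℕ) : ℕ := (m * q + p - 1) / p
def fC (p : ℕ) (g : ZMod p) (q m : ℕ) : ℕ := (g⁻¹ * (-((m * q : ℕ) : ZMod p))).val
def fD (p : ℕ) (g : ZMod p) (q m : ℕ) : ℕ := (fC p g q m + p - fA p q m % p) % p
def fS (p : ℕ) (g : ZMod p) (q m : ℕ) : ℕ := fA p q m + fD p g q m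
def fT (p : ℕ) (g : ZMod p) (q m : ℕ) : ℕ := p * fS p g q m - m * q

lemma fA_lb (p q m : ℕ) (hp : 0 < p) : m * q ≤ p * fA p q m := by
  have h := Nat.div_add_mod (m * q + p - 1) p
  have hr : (m * q + p - 1) % p < p := Nat.mod_lt _ hp
  have hE : m * q + p - 1 = m * q + (p - 1) := Nat.add_sub_assoc hp _
  have h1 : p - 1 + 1 = p := Nat.sub_add_cancel hp
  unfold fA
  nlinarith [h, hr, hE, h1]

lemma fA_ub (p q m : ℕ) (hp : 0 < p) : p * fA p q m ≤ m * q + (p - 1) := by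
  unfold fA
  calc p * ((m * q + p - 1) / p) = (m * q + p - 1) / p * p := Nat.mul_comm _ _
    _ ≤ m * q + p - 1 := Nat.div_mul_le_self _ _
    _ = m * q + (p - 1) := Nat.add_sub_assoc hp _

lemma crtSeq'_eq_one_iff (p q γ : ℕ) (hq : 0 < q) (g : ZMod p) (t : ℕ) :
    crtSeq' p q γ g t = 1 ↔ g * ((γ * t % q : ℕ) : ZMod p) = (t : ZMod p) := by
  have hmem : (((t : ZMod p), ((γ * t : ℕ) : ZMod q)) ∈ crtIdx p q g) ↔
      g * ((γ * t % q : ℕ) : ZMod p) = (t : ZMod p) := by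
    simp only [crtIdx, Finset.mem_image, Finset.mem_range, Prod.mk.injEq]
    constructor
    · rintro ⟨k, hk, h1, h2⟩
      have : k ≡ γ * t [MOD q] := (ZMod.natCast_eq_natCast_iff _ _ _).mp h2
      have hkk : k = γ * t % q := by
        have h3 : k % q = γ * t % q := this
        rw [Nat.mod_eq_of_lt hk] at h3
        exact h3
      subst hkk
      exact h1
    · intro h
      exact ⟨γ * t % q, Nat.mod_lt _ hq, h, ZMod.natCast_mod _ _⟩
  constructor
  · intro h
    apply hmem.mp
    by_contra hh
    unfold crtSeq' at h
    rw [if_neg hh] at h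
    exact absurd h (by omega)
  · intro h
    unfold crtSeq'
    rw [if_pos (hmem.mpr h)]

theorem stmt18 (p q γ : ℕ) (hp : p.Prime) (hcop : Nat.Coprime p q)
    (hq : 2 * p ^ 2 < q) (hγ : γ * p % q = 1)
    (g : ZMod p) (hg : g ≠ 0) :
    ((Finset.range (p ^ 2)).filter (fun t => crtSeq' p q γ g t = 1)).card = p := by
  haveI : Fact p.Prime := ⟨hp⟩
  haveI : NeZero p := ⟨hp.ne_zero⟩
  have hp0 : 0 < p := hp.pos
  have hp2 : 2 ≤ p := hp.two_le
  have hpp : 0 < p ^ 2 := pow_pos hp0 2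
  have hq0 : 0 < q := by omega
  have hpq : p ^ 2 < q := by omega
  have hγq : γ * p ≡ 1 [MOD q] := by
    unfold Nat.ModEq
    rw [hγ, Nat.mod_eq_of_lt (by omega)]
  have hmodγ : ∀ t : ℕ, p * (γ * t % q) ≡ t [MOD q] := by
    intro t
    calc p * (γ * t % q) ≡ p * (γ * t) [MOD q] :=
          Nat.ModEq.mul_left p (Nat.mod_modEq _ _)
      _ = (γ * p) * t := by ring
      _ ≡ 1 * t [MOD q] := Nat.ModEq.mul_right t hγq
      _ = t := one_mul t
  -- cast facts about fS, fC
  have hCcast : ∀ m : ℕ, ((fC p g q m : ℕ) : ZMod p) = g⁻¹ * (-((m * q : ℕ) : ZMod p)) := by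
    intro m
    unfold fC
    rw [ZMod.natCast_val, ZMod.cast_id]
  have hDlt : ∀ m : ℕ, fD p g q m < p := fun m => Nat.mod_lt _ hp0
  have hDcast : ∀ m : ℕ, ((fD p g q m : ℕ) : ZMod p)
      = ((fC p g q m : ℕ) : ZMod p) - ((fA p q m : ℕ) : ZMod p) := by
    intro m
    unfold fD
    rw [ZMod.natCast_mod, Nat.cast_sub (by have := Nat.mod_lt (fA p q m) hp0; omega),
      Nat.cast_add, ZMod.natCast_mod, ZMod.natCast_self]
    ring
  have hScast : ∀ m : ℕ, ((fS p g q m : ℕ) : ZMod p) = ((fC p g q m : ℕ) : ZMod p) := by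
    intro m
    unfold fS
    rw [Nat.cast_add, hDcast]
    ring
  -- main facts about fS/fT for m < p
  have keyJ : ∀ m : ℕ, m < p →
      m * q ≤ p * fS p g q m ∧ fS p g q m < q ∧ fT p g q m < p ^ 2 ∧
      γ * fT p g q m % q = fS p g q m ∧
      g * ((fS p g q m : ℕ) : ZMod p) = ((fT p g q m : ℕ) : ZMod p) := by
    intro m hm
    have hA1 : m * q ≤ p * fA p q m := fA_lb p q m hp0
    have hA2 : p * fA p q m ≤ m * q + (p - 1) := fA_ub p q m hp0
    have hD := hDlt m
    have hSe : fS p g q m = fA p q m + fD p g q m := rfl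
    have hmq : m * q ≤ p * fS p g q m := by
      rw [hSe, Nat.mul_add]; omega
    have hpS : p * fS p g q m ≤ m * q + (p - 1) + p * (p - 1) := by
      rw [hSe, Nat.mul_add]
      have : p * fD p g q m ≤ p * (p - 1) := Nat.mul_le_mul_left p (by omega)
      omega
    have hSq : fS p g q m < q := by
      have h1 : m * q ≤ (p - 1) * q := Nat.mul_le_mul_right q (by omega)
      have h2 : p * fS p g q m < p * q := by
        have hpp1 : p * (p - 1) + (p - 1) < p ^ 2 := by
          have : p * (p - 1) + (p - 1) = (p + 1) * (p - 1) := by ring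
          rw [this]
          have : (p + 1) * (p - 1) < p * p := by
            cases p with
            | zero => omega
            | succ n => simp [Nat.succ_sub_one]; nlinarith
          calc (p + 1) * (p - 1) < p * p := this
            _ = p ^ 2 := (sq p).symm
        have h3 : (p - 1) * q + q = p * q := by
          have : (p - 1) + 1 = p := by omega
          calc (p - 1) * q + q = ((p - 1) + 1) * q := by ring
            _ = p * q := by rw [this]
        calc p * fS p g q m ≤ m * q + (p - 1) + p * (p - 1) := hpS
          _ ≤ (p - 1) * q + (p - 1) + p * (p - 1) := by omega
          _ < (p - 1) * q + p ^ 2 := by omega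
          _ < (p - 1) * q + q := by omega
          _ = p * q := h3
      exact Nat.lt_of_mul_lt_mul_left h2
    have hTe : fT p g q m = p * fS p g q m - m * q := rfl
    have hT : fT p g q m < p ^ 2 := by
      have : p * fS p g q m - m * q ≤ (p - 1) + p * (p - 1) := by omega
      have h2 : (p - 1) + p * (p - 1) < p ^ 2 := by
        have : (p - 1) + p * (p - 1) = (p + 1) * (p - 1) := by ring
        rw [this]
        cases p with
        | zero => omega
        | succ n =>
          simp only [Nat.succ_sub_one, pow_two]
          nlinarith
      omega
    have hadd : fT p g q m + m * q = p * fS p g q m := Nat.sub_add_cancel hmq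
    have hγT : γ * fT p g q m % q = fS p g q m := by
      have h1 : γ * fT p g q m ≡ γ * fT p g q m + γ * m * q [MOD q] := by
        refine (Nat.modEq_iff_dvd' (Nat.le_add_right _ _)).mpr ⟨γ * m, ?_⟩
        rw [Nat.add_sub_cancel_left]
        ring
      have h2 : γ * fT p g q m + γ * m * q = (γ * p) * fS p g q m := by
        calc γ * fT p g q m + γ * m * q = γ * (fT p g q m + m * q) := by ring
          _ = γ * (p * fS p g q m) := by rw [hadd]
          _ = (γ * p) * fS p g q m := by ring
      have h3 : γ * fT p g q m ≡ fS p g q m [MOD q] := by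
        calc γ * fT p g q m ≡ γ * fT p g q m + γ * m * q [MOD q] := h1
          _ = (γ * p) * fS p g q m := h2
          _ ≡ 1 * fS p g q m [MOD q] := Nat.ModEq.mul_right _ hγq
          _ = fS p g q m := one_mul _
      have h4 : γ * fT p g q m % q = fS p g q m % q := h3
      rw [h4, Nat.mod_eq_of_lt hSq]
    have hTcast : ((fT p g q m : ℕ) : ZMod p) = -((m * q : ℕ) : ZMod p) := by
      rw [hTe, Nat.cast_sub hmq, Nat.cast_mul, ZMod.natCast_self]
      ring
    have hgs : g * ((fS p g q m : ℕ) : ZMod p) = ((fT p g q m : ℕ) : ZMod p) := by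
      rw [hScast, hCcast, hTcast, ← mul_assoc, mul_inv_cancel₀ hg, one_mul]
    exact ⟨hmq, hSq, hT, hγT, hgs⟩
  -- the bijection
  conv_rhs => rw [← Finset.card_range p]
  apply Finset.card_nbij' (fun t => (p * (γ * t % q) - t) / q) (fun m => fT p g q m)
  · -- forward: i maps into range p
    intro t ht
    simp only [Finset.mem_coe, Finset.mem_filter, Finset.mem_range] at ht
    obtain ⟨htp, hcond⟩ := ht
    set s := γ * t % q with hs
    have hsq : s < q := Nat.mod_lt _ hq0
    have hps : p * s ≡ t [MOD q] := hmodγ t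
    have hts : t ≤ p * s := by
      rcases lt_or_ge (p * s) q with h | h
      · have hmm : p * s % q = t % q := hps
        rw [Nat.mod_eq_of_lt h, Nat.mod_eq_of_lt (by omega)] at hmm
        omega
      · omega
    have hdvd : q ∣ p * s - t := (Nat.modEq_iff_dvd' hts).mp hps.symm
    have hmqe : (p * s - t) / q * q = p * s - t := Nat.div_mul_cancel hdvd
    have : (p * s - t) / q * q < p * q := by
      have : p * s < p * q := (Nat.mul_lt_mul_left hp0).mpr hsq
      omega
    simp only [Finset.mem_coe, Finset.mem_range]
    exact Nat.lt_of_mul_lt_mul_right this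
  · -- backward: j maps into the filter
    intro m hm
    simp only [Finset.mem_coe, Finset.mem_range] at hm
    obtain ⟨hmq, hSq, hT, hγT, hgs⟩ := keyJ m hm
    simp only [Finset.mem_coe, Finset.mem_filter, Finset.mem_range]
    refine ⟨hT, (crtSeq'_eq_one_iff p q γ hq0 g _).mpr ?_⟩
    rw [hγT]
    exact hgs
  · -- left inverse : fT (i t) = t
    intro t ht
    simp only [Finset.mem_coe, Finset.mem_filter, Finset.mem_range] at ht
    obtain ⟨htp, hcond⟩ := ht
    rw [crtSeq'_eq_one_iff p q γ hq0 g t] at hcond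
    set s := γ * t % q with hs
    have hsq : s < q := Nat.mod_lt _ hq0
    have hps : p * s ≡ t [MOD q] := hmodγ t
    have hts : t ≤ p * s := by
      rcases lt_or_ge (p * s) q with h | h
      · have hmm : p * s % q = t % q := hps
        rw [Nat.mod_eq_of_lt h, Nat.mod_eq_of_lt (by omega)] at hmm
        omega
      · omega
    have hdvd : q ∣ p * s - t := (Nat.modEq_iff_dvd' hts).mp hps.symm
    set m := (p * s - t) / q with hmdef
    have hmqe : m * q = p * s - t := Nat.div_mul_cancel hdvd
    have hm : m < p := by
      have h1 : m * q < p * q := by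
        have : p * s < p * q := (Nat.mul_lt_mul_left hp0).mpr hsq
        omega
      exact Nat.lt_of_mul_lt_mul_right h1
    have hpse : p * s = m * q + t := by omega
    have hA1 : m * q ≤ p * fA p q m := fA_lb p q m hp0
    have hA2 : p * fA p q m ≤ m * q + (p - 1) := fA_ub p q m hp0
    -- fA ≤ s
    have hAs : fA p q m ≤ s := by
      have : m * q ≤ p * s := by omega
      unfold fA
      rw [Nat.div_le_iff_le_mul_add_pred hp0]
      have hE : m * q + p - 1 = m * q + (p - 1) := Nat.add_sub_assoc hp0 _
      omega
    -- s < fA + p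
    have hsA : s < fA p q m + p := by
      have h1 : p * s < p * fA p q m + p * p := by
        have : t < p * p := by
          calc t < p ^ 2 := htp
            _ = p * p := sq p
        omega
      have h2 : p * fA p q m + p * p = p * (fA p q m + p) := by ring
      rw [h2] at h1
      exact Nat.lt_of_mul_lt_mul_left h1
    -- t cast = -(m*q)
    have hTcast : (t : ZMod p) = -((m * q : ℕ) : ZMod p) := by
      have : t = p * s - m * q := by omega
      rw [this, Nat.cast_sub (by omega), Nat.cast_mul (p) s, ZMod.natCast_self]
      ring
    -- s cast = fC cast
    have hsC : ((s : ℕ) : ZMod p) = ((fC p g q m : ℕ) : ZMod p) := by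
      rw [hCcast]
      have h1 : g * (s : ZMod p) = -((m * q : ℕ) : ZMod p) := by
        rw [hcond, hTcast]
      calc (s : ZMod p) = g⁻¹ * (g * (s : ZMod p)) := by
            rw [← mul_assoc, inv_mul_cancel₀ hg, one_mul]
        _ = g⁻¹ * (-((m * q : ℕ) : ZMod p)) := by rw [h1]
    -- fD m = s - fA
    have hfD : fD p g q m = s - fA p q m := by
      have h1 : ((fD p g q m : ℕ) : ZMod p) = ((s - fA p q m : ℕ) : ZMod p) := by
        rw [hDcast, ← hsC, Nat.cast_sub hAs]
      have h2 := hDlt m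
      have h3 : s - fA p q m < p := by omega
      calc fD p g q m = ((fD p g q m : ℕ) : ZMod p).val := (ZMod.val_cast_of_lt h2).symm
        _ = ((s - fA p q m : ℕ) : ZMod p).val := by rw [h1]
        _ = s - fA p q m := ZMod.val_cast_of_lt h3
    have hfS : fS p g q m = s := by
      unfold fS
      rw [hfD]
      omega
    show fT p g q m = t
    unfold fT
    rw [hfS]
    omega
  · -- right inverse : i (fT m) = m
    intro m hm
    simp only [Finset.mem_coe, Finset.mem_range] at hm
    obtain ⟨hmq, hSq, hT, hγT, hgs⟩ := keyJ m hm
    show (p * (γ * fT p g q m % q) - fT p g q m) / q = m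
    rw [hγT]
    have : p * fS p g q m - fT p g q m = m * q := by
      unfold fT
      omega
    rw [this]; rw [Nat.mul_div_assoc m (dvd_refl q), Nat.div_self hq0, Nat.mul_one]
end
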